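/- arXiv:2002.02292 — 14 statements merged into one kernel-verified Lean document; each statement's English description precedes it below -/
import Mathlib

section
/- Let f₁,…,f_s ∈ ℤ[x] (s ≥ 2) be nonzero coprime polynomials. Then the set D* = {gcd(f₁(n),…,f_s(n)) : n ∈ ℤ} is stable under gcd: for all n₁, n₂ ∈ ℤ there exists n ∈ ℤ with gcd(d_{n₁}, d_{n₂}) = d_n, where d_m = gcd(f₁(m),…,f_s(m)). -/
open Polynomial

lemma exists_combo {s : ℕ} (hs : 0 < s) (f : Fin s → Polynomial ℤ) (hne : ∀ i, f i ≠ 0)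
    (hcop : ∀ z : ℂ, ∃ i, Polynomial.aeval z (f i) ≠ 0) :
    ∃ k : ℤ, k ≠ 0 ∧ ∃ g : Fin s → Polynomial ℤ, ∑ i, g i * f i = C k := by
  classical
  set F : Fin s → ℚ[X] := fun i => (f i).map (Int.castRingHom ℚ) with hF
  have hFne : ∀ i, F i ≠ 0 := fun i h => hne i
    (Polynomial.map_injective (Int.castRingHom ℚ) Int.cast_injective
      (h.trans (Polynomial.map_zero _).symm))
  have hspan : Ideal.span (Set.range F) = ⊤ := by
    by_contra hI
    obtain ⟨g, hg⟩ := (IsPrincipalIdealRing.principal (Ideal.span (Set.range F))).principal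
    rw [Ideal.submodule_span_eq] at hg
    have hgmem : ∀ i, F i ∈ Ideal.span {g} := fun i => by
      rw [← hg]; exact Ideal.subset_span ⟨i, rfl⟩
    have hgne : g ≠ 0 := by
      rintro rfl
      have := hgmem ⟨0, hs⟩
      rw [Ideal.span_singleton_eq_bot.mpr rfl] at this
      exact hFne ⟨0, hs⟩ (by simpa using this)
    have hgnu : ¬ IsUnit g := fun h => hI (by rw [hg, Ideal.span_singleton_eq_top]; exact h)
    have hdeg : (g.map (algebraMap ℚ ℂ)).degree ≠ 0 := by
      rw [Polynomial.degree_map]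
      exact fun h => hgnu (Polynomial.isUnit_iff_degree_eq_zero.mpr h)
    obtain ⟨z, hz⟩ := IsAlgClosed.exists_root (g.map (algebraMap ℚ ℂ)) hdeg
    obtain ⟨i, hi⟩ := hcop z
    apply hi
    obtain ⟨q, hq⟩ := Ideal.mem_span_singleton.mp (hgmem i)
    have : Polynomial.aeval z (F i) = 0 := by
      rw [hq, map_mul]
      rw [Polynomial.IsRoot, Polynomial.eval_map] at hz
      rw [show Polynomial.aeval z g = 0 by rwa [Polynomial.aeval_def], zero_mul]
    rwa [hF, show (Int.castRingHom ℚ) = algebraMap ℤ ℚ from rfl,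
      Polynomial.aeval_map_algebraMap] at this
  have h1 : (1 : ℚ[X]) ∈ Ideal.span (Set.range F) := by rw [hspan]; trivial
  rw [Ideal.span, Submodule.mem_span_range_iff_exists_fun] at h1
  obtain ⟨c, hc⟩ := h1
  choose b hb using fun i =>
    IsLocalization.integerNormalization_map_to_map (nonZeroDivisors ℤ) (c i)
  set k : ℤ := ∏ i, (b i : ℤ) with hk
  have hkne : k ≠ 0 := by
    apply Finset.prod_ne_zero_iff.mpr
    intro i _
    exact nonZeroDivisors.ne_zero (b i).2
  refine ⟨k, hkne, fun i => C (∏ j ∈ Finset.univ.erase i, (b j : ℤ)) *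
    IsLocalization.integerNormalization (nonZeroDivisors ℤ) (c i), ?_⟩
  apply Polynomial.map_injective (Int.castRingHom ℚ) Int.cast_injective
  rw [Polynomial.map_sum, Polynomial.map_C]
  have key : ∀ i : Fin s,
      (C (∏ j ∈ Finset.univ.erase i, (b j : ℤ)) *
        IsLocalization.integerNormalization (nonZeroDivisors ℤ) (c i) * f i).map
         (Int.castRingHom ℚ) = C ((k : ℤ) : ℚ) * (c i * F i) := by
    intro i
    rw [Polynomial.map_mul, Polynomial.map_mul, Polynomial.map_C]
    have hbi := hb i
    rw [algebraMap_int_eq] at hbi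
    rw [hbi, zsmul_eq_mul, ← Polynomial.C_eq_intCast]
    have hkk : (∏ j ∈ Finset.univ.erase i, (b j : ℤ)) * (b i : ℤ) = k :=
      Finset.prod_erase_mul _ _ (Finset.mem_univ i)
    rw [hF, ← hkk]
    push_cast [Polynomial.C_mul, eq_intCast]
    ring
  rw [Finset.sum_congr rfl fun i _ => key i, ← Finset.mul_sum]
  have hc' : ∑ i, c i * F i = 1 := by simpa [smul_eq_mul] using hc
  rw [hc', mul_one]
  simp [eq_intCast]

theorem stmt4 (s : ℕ) (hs : 2 ≤ s) (f : Fin s → Polynomial ℤ)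
    (hne : ∀ i, f i ≠ 0)
    (hcop : ∀ z : ℂ, ∃ i, Polynomial.aeval z (f i) ≠ 0) :
    ∀ n₁ n₂ : ℤ, ∃ n : ℤ,
      gcd (Finset.univ.gcd fun i => (f i).eval n₁)
          (Finset.univ.gcd fun i => (f i).eval n₂) =
        Finset.univ.gcd fun i => (f i).eval n := by
  classical
  intro n₁ n₂
  obtain ⟨k, hkne, g, hgk⟩ := exists_combo (by omega) f hne hcop
  set D : ℤ → ℤ := fun m => Finset.univ.gcd fun i => (f i).eval m with hDdef
  have hDnn : ∀ m, 0 ≤ D m := by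
    intro m
    have h := Finset.normalize_gcd (s := (Finset.univ : Finset (Fin s)))
      (f := fun i => (f i).eval m)
    rw [← Int.abs_eq_normalize] at h
    calc (0:ℤ) ≤ |D m| := abs_nonneg _
    _ = D m := h
  have hDne0 : ∀ m, D m ≠ 0 := by
    intro m h
    rw [hDdef] at h
    simp only [Finset.gcd_eq_zero_iff] at h
    obtain ⟨i, hi⟩ := hcop (m : ℂ)
    apply hi
    have h2 : Polynomial.aeval ((m : ℤ) : ℂ) (f i) = (((f i).eval m : ℤ) : ℂ) := by
      rw [show ((m : ℤ) : ℂ) = algebraMap ℤ ℂ m from rfl,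
        Polynomial.aeval_algebraMap_apply_eq_algebraMap_eval]
      rfl
    rw [h2, h i (Finset.mem_univ i)]
    simp
  have hdvdk : ∀ m, D m ∣ k := by
    intro m
    have h := congrArg (Polynomial.eval m) hgk
    simp only [Polynomial.eval_finset_sum, Polynomial.eval_mul, Polynomial.eval_C] at h
    rw [← h]
    apply Finset.dvd_sum
    intro i _
    exact Dvd.dvd.mul_left (Finset.gcd_dvd (Finset.mem_univ i)) _
  have key : ∀ (c m m' : ℤ), c ∣ m - m' → c ∣ D m → c ∣ D m' := by
    intro c m m' hmm h
    rw [hDdef] at h ⊢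
    rw [Finset.dvd_gcd_iff] at h ⊢
    intro i hi
    have h2 := h i hi
    have h3 : c ∣ (f i).eval m - (f i).eval m' :=
      dvd_trans hmm (Polynomial.sub_dvd_eval_sub m m' (f i))
    have := dvd_sub h2 h3
    simpa using this
  set Dn : ℤ → ℕ := fun m => (D m).natAbs with hDndef
  have hDabs : ∀ m, ((Dn m : ℕ) : ℤ) = D m := fun m => Int.natAbs_of_nonneg (hDnn m)
  have hDnne : ∀ m, Dn m ≠ 0 := fun m h => hDne0 m (by rw [← hDabs m, h]; rfl)
  set Nn : ℕ := k.natAbs with hNndef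
  have hNne : Nn ≠ 0 := fun h => hkne (Int.natAbs_eq_zero.mp h)
  have hdvdN : ∀ m, Dn m ∣ Nn := fun m => Int.natAbs_dvd_natAbs.mpr (hdvdk m)
  set e : ℕ → ℕ := fun p => Nn.factorization p with hedef
  have hle : ∀ (p : ℕ) (m : ℤ), (Dn m).factorization p ≤ e p := by
    intro p m
    exact (Finsupp.le_def.mp ((Nat.factorization_le_iff_dvd (hDnne m) hNne).mpr (hdvdN m))) p
  have vle : ∀ (p : ℕ), p.Prime → ∀ m m' : ℤ, ((p:ℤ) ^ (e p) ∣ m - m') →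
      (Dn m).factorization p ≤ (Dn m').factorization p := by
    intro p hp m m' hmm
    have h1 : p ^ ((Dn m).factorization p) ∣ Dn m := Nat.ordProj_dvd _ _
    have h2 : (p:ℤ) ^ ((Dn m).factorization p) ∣ D m := by
      have := Int.natCast_dvd_natCast.mpr h1
      rwa [Nat.cast_pow, hDabs m] at this
    have h3 : (p:ℤ) ^ ((Dn m).factorization p) ∣ m - m' :=
      (pow_dvd_pow _ (hle p m)).trans hmm
    have h4 : (p:ℤ) ^ ((Dn m).factorization p) ∣ D m' := key _ _ _ h3 h2
    have h5 : p ^ ((Dn m).factorization p) ∣ Dn m' := by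
      rw [← hDabs m', ← Nat.cast_pow] at h4
      exact_mod_cast h4
    exact (Nat.Prime.pow_dvd_iff_le_factorization hp (hDnne m')).mp h5
  have valkey : ∀ (p : ℕ), p.Prime → ∀ m m' : ℤ, ((p:ℤ) ^ (e p) ∣ m - m') →
      (Dn m).factorization p = (Dn m').factorization p := by
    intro p hp m m' hmm
    refine le_antisymm (vle p hp m m' hmm) (vle p hp m' m ?_)
    rw [← neg_sub]
    exact dvd_neg.mpr hmm
  set P₁ : Finset ℕ := Nn.primeFactors.filter
    (fun p => (Dn n₁).factorization p ≤ (Dn n₂).factorization p) with hP₁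
  set P₂ : Finset ℕ := Nn.primeFactors.filter
    (fun p => ¬ (Dn n₁).factorization p ≤ (Dn n₂).factorization p) with hP₂
  set a : ℕ := ∏ p ∈ P₁, p ^ e p with ha
  set b : ℕ := ∏ p ∈ P₂, p ^ e p with hb
  have hab : Nat.Coprime a b := by
    apply Nat.Coprime.prod_left
    intro p hp
    apply Nat.Coprime.prod_right
    intro q hq
    apply Nat.Coprime.pow
    have hpp : p.Prime := Nat.prime_of_mem_primeFactors (Finset.mem_of_mem_filter p hp)
    have hqp : q.Prime := Nat.prime_of_mem_primeFactors (Finset.mem_of_mem_filter q hq)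
    rw [Nat.coprime_primes hpp hqp]
    rintro rfl
    exact (Finset.mem_filter.mp hq).2 (Finset.mem_filter.mp hp).2
  have hcopab : IsCoprime (a : ℤ) (b : ℤ) := by
    rw [Int.isCoprime_iff_nat_coprime]
    simpa using hab
  obtain ⟨u, v, huv⟩ := hcopab
  refine ⟨n₁ * (v * b) + n₂ * (u * a), ?_⟩
  set n : ℤ := n₁ * (v * b) + n₂ * (u * a) with hn
  have hna : (a:ℤ) ∣ n - n₁ := ⟨u * (n₂ - n₁), by rw [hn]; linear_combination n₁ * huv⟩
  have hnb : (b:ℤ) ∣ n - n₂ := ⟨v * (n₁ - n₂), by rw [hn]; linear_combination n₂ * huv⟩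
  have main : Nat.gcd (Dn n₁) (Dn n₂) = Dn n := by
    apply Nat.eq_of_factorization_eq
    · exact fun h => hDnne n₁ (Nat.eq_zero_of_gcd_eq_zero_left h)
    · exact hDnne n
    intro p
    rw [Nat.factorization_gcd (hDnne n₁) (hDnne n₂), Finsupp.inf_apply]
    by_cases hp : p.Prime
    · by_cases hpN : p ∈ Nn.primeFactors
      · by_cases h12 : (Dn n₁).factorization p ≤ (Dn n₂).factorization p
        · have hpa : p ^ e p ∣ a := Finset.dvd_prod_of_mem _
            (Finset.mem_filter.mpr ⟨hpN, h12⟩)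
          have hd : (p:ℤ) ^ e p ∣ n - n₁ := by
            refine dvd_trans ?_ hna
            exact_mod_cast Int.natCast_dvd_natCast.mpr hpa
          rw [min_eq_left h12]
          exact (valkey p hp n n₁ hd).symm
        · have hpb : p ^ e p ∣ b := Finset.dvd_prod_of_mem _
            (Finset.mem_filter.mpr ⟨hpN, h12⟩)
          have hd : (p:ℤ) ^ e p ∣ n - n₂ := by
            refine dvd_trans ?_ hnb
            exact_mod_cast Int.natCast_dvd_natCast.mpr hpb
          rw [min_eq_right (le_of_not_ge h12)]
          exact (valkey p hp n n₂ hd).symm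
      · have he0 : e p = 0 := by
          rw [hedef]
          exact Finsupp.notMem_support_iff.mp (by rwa [Nat.support_factorization])
        have z1 := Nat.le_zero.mp (he0 ▸ hle p n₁)
        have z2 := Nat.le_zero.mp (he0 ▸ hle p n₂)
        have z3 := Nat.le_zero.mp (he0 ▸ hle p n)
        rw [z1, z2, z3]
        rfl
    · simp [Nat.factorization_eq_zero_of_not_prime _ hp]
  have : gcd (D n₁) (D n₂) = D n := by
    rw [← Int.coe_gcd, Int.gcd_def]
    have main' : (D n₁).natAbs.gcd (D n₂).natAbs = Dn n := main
    rw [main']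
    exact hDabs n
  exact this
end

section
/- Let f₁,…,f_s ∈ ℤ[x] (s ≥ 2) be nonzero coprime polynomials. Then the set D* = {gcd(f₁(n),…,f_s(n)) : n ∈ ℤ} is stable under lcm: for all n₁, n₂ ∈ ℤ there exists n ∈ ℤ with lcm(d_{n₁}, d_{n₂}) = d_n. -/
open Polynomial

lemma exists_int_combination (s : ℕ) (hs : 0 < s) (f : Fin s → Polynomial ℤ)
    (hne : ∀ i, f i ≠ 0)
    (hcop : ∀ z : ℂ, ∃ i, Polynomial.aeval z (f i) ≠ 0) :
    ∃ (B : ℤ) (r : Fin s → Polynomial ℤ), B ≠ 0 ∧ ∑ i, r i * f i = C B := by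
  set F : Fin s → Polynomial ℚ := fun i => (f i).map (algebraMap ℤ ℚ) with hFdef
  have hmapinj : Function.Injective (Polynomial.map (algebraMap ℤ ℚ)) :=
    Polynomial.map_injective _ fun a b h => by exact_mod_cast h
  have hF : ∀ i, F i ≠ 0 := by
    intro i h
    exact hne i (hmapinj (by rw [Polynomial.map_zero]; exact h))
  set I : Ideal (Polynomial ℚ) := Ideal.span (Set.range F) with hIdef
  have hmem : ∀ i, F i ∈ I := fun i => Ideal.subset_span ⟨i, rfl⟩
  have hItop : I = ⊤ := by
    obtain ⟨g, hg⟩ := (inferInstance : I.IsPrincipal)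
    have hgdvd : ∀ i, g ∣ F i := fun i =>
      Ideal.mem_span_singleton.mp (by have := hmem i; rw [hg] at this; exact this)
    have hg0 : g ≠ 0 := by
      intro h
      exact hF ⟨0, hs⟩ (eq_zero_of_zero_dvd (h ▸ hgdvd ⟨0, hs⟩))
    have hgu : IsUnit g := by
      by_contra hgu
      have hdeg : 0 < (g.map (algebraMap ℚ ℂ)).degree := by
        rw [Polynomial.degree_map]
        rcases Polynomial.degree_eq_natDegree hg0 with h
        rw [h]
        have : g.natDegree ≠ 0 := by
          intro h0
          exact hgu (Polynomial.isUnit_iff_degree_eq_zero.mpr (by rw [h]; exact_mod_cast h0))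
        exact_mod_cast Nat.pos_of_ne_zero this
      obtain ⟨z, hz⟩ := Complex.exists_root hdeg
      obtain ⟨i, hi⟩ := hcop z
      apply hi
      have : (g.map (algebraMap ℚ ℂ)) ∣ ((f i).map (algebraMap ℤ ℂ)) := by
        have := hgdvd i
        have h2 : (F i).map (algebraMap ℚ ℂ) = (f i).map (algebraMap ℤ ℂ) := by
          rw [hFdef]
          simp only [Polynomial.map_map]
          congr 1
        rw [← h2]
        exact Polynomial.map_dvd _ this
      have hr : ((f i).map (algebraMap ℤ ℂ)).IsRoot z := hz.dvd this
      rw [Polynomial.IsRoot, Polynomial.eval_map] at hr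
      simpa [Polynomial.aeval_def] using hr
    rw [hg]
    exact Ideal.span_singleton_eq_top.mpr hgu
  have h1 : (1 : Polynomial ℚ) ∈ I := hItop ▸ Submodule.mem_top
  have h1' : (1 : Polynomial ℚ) ∈ Submodule.span (Polynomial ℚ) (Set.range F) := h1
  rw [Submodule.mem_span_range_iff_exists_fun] at h1'
  obtain ⟨c, hc⟩ := h1'
  -- clear denominators
  have hloc : ∀ i, ∃ b : nonZeroDivisors ℤ,
      (IsLocalization.integerNormalization (nonZeroDivisors ℤ) (c i)).map (algebraMap ℤ ℚ)
        = (b : ℤ) • c i :=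
    fun i => IsLocalization.integerNormalization_map_to_map _ (c i)
  choose b hb using hloc
  set q : Fin s → Polynomial ℤ :=
    fun i => IsLocalization.integerNormalization (nonZeroDivisors ℤ) (c i) with hqdef
  refine ⟨∏ j, (b j : ℤ), fun i => (∏ j ∈ Finset.univ.erase i, (b j : ℤ)) • q i, ?_, ?_⟩
  · exact Finset.prod_ne_zero_iff.mpr fun j _ => nonZeroDivisors.ne_zero (b j).2
  · apply hmapinj
    have key : ∀ i : Fin s,
        ((∏ j ∈ Finset.univ.erase i, (b j : ℤ)) • q i * f i).map (algebraMap ℤ ℚ)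
          = (∏ j, (b j : ℤ)) • (c i * F i) := by
      intro i
      have hq : (q i).map (algebraMap ℤ ℚ) = ((b i : ℤ) : Polynomial ℚ) * c i := by
        rw [hqdef]
        rw [hb i, zsmul_eq_mul]
      rw [← Finset.prod_erase_mul _ _ (Finset.mem_univ i)]
      simp only [zsmul_eq_mul, Polynomial.map_mul, Polynomial.map_intCast, hq]
      push_cast
      ring
    calc (∑ i, (∏ j ∈ Finset.univ.erase i, (b j : ℤ)) • q i * f i).map (algebraMap ℤ ℚ)
        = ∑ i, (∏ j, (b j : ℤ)) • (c i * F i) := by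
          rw [Polynomial.map_sum]; exact Finset.sum_congr rfl fun i _ => key i
      _ = (∏ j, (b j : ℤ)) • (1 : Polynomial ℚ) := by
          have h2 : ∑ i : Fin s, c i * F i = 1 := by simpa [smul_eq_mul] using hc
          rw [← Finset.smul_sum, h2]
      _ = (C (∏ j, (b j : ℤ))).map (algebraMap ℤ ℚ) := by
          simp only [zsmul_eq_mul, mul_one, Polynomial.map_C]
          push_cast
          simp [Polynomial.C_eq_intCast]

lemma coprime_split (N a b : ℕ) (hN : N ≠ 0) (ha : a ∣ N) (hb : b ∣ N) :
    ∃ M₁ M₂ : ℕ, Nat.Coprime M₁ M₂ ∧ M₁ * M₂ = N ∧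
      Nat.gcd a M₁ * Nat.gcd b M₂ = Nat.lcm a b := by
  have ha0 : a ≠ 0 := fun h => hN (by simpa [h] using ha)
  have hb0 : b ≠ 0 := fun h => hN (by simpa [h] using hb)
  set P := fun p : ℕ => b.factorization p ≤ a.factorization p with hP
  refine ⟨∏ p ∈ N.primeFactors.filter P, p ^ N.factorization p,
    ∏ p ∈ N.primeFactors.filter (fun p => ¬ P p), p ^ N.factorization p, ?_, ?_, ?_⟩
  case _ =>
    refine Nat.coprime_prod_left_iff.mpr fun p hp => Nat.coprime_prod_right_iff.mpr fun q hq => ?_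
    have hpP := Finset.mem_filter.mp hp
    have hqP := Finset.mem_filter.mp hq
    have hpq : p ≠ q := fun h => hqP.2 (h ▸ hpP.2)
    exact Nat.Coprime.pow _ _ ((Nat.coprime_primes (Nat.prime_of_mem_primeFactors hpP.1)
      (Nat.prime_of_mem_primeFactors hqP.1)).mpr hpq)
  case _ =>
    rw [Finset.prod_filter_mul_prod_filter_not]
    have := Nat.factorization_prod_pow_eq_self hN
    rwa [Finsupp.prod, Nat.support_factorization] at this
  case _ =>
    -- factorization of the partial products
    have hfac : ∀ T : Finset ℕ, T ⊆ N.primeFactors → ∀ q : ℕ,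
        (∏ p ∈ T, p ^ N.factorization p).factorization q
          = if q ∈ T then N.factorization q else 0 := by
      intro T hT q
      rw [Nat.factorization_prod (fun p hp =>
        pow_ne_zero _ (Nat.prime_of_mem_primeFactors (hT hp)).ne_zero)]
      rw [Finset.sum_apply']
      rw [Finset.sum_congr rfl (fun p hp => by
        rw [Nat.Prime.factorization_pow (Nat.prime_of_mem_primeFactors (hT hp)),
          Finsupp.single_apply])]
      exact Finset.sum_ite_eq' T q _
    have hprodne : ∀ T : Finset ℕ, T ⊆ N.primeFactors →
        (∏ p ∈ T, p ^ N.factorization p) ≠ 0 := fun T hT =>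
      Finset.prod_ne_zero_iff.mpr fun p hp =>
        pow_ne_zero _ (Nat.prime_of_mem_primeFactors (hT hp)).ne_zero
    have h1 := hprodne _ (Finset.filter_subset P N.primeFactors)
    have h2 := hprodne _ (Finset.filter_subset (fun p => ¬ P p) N.primeFactors)
    have hfa : a.factorization ≤ N.factorization :=
      (Nat.factorization_le_iff_dvd ha0 hN).mpr ha
    have hfb : b.factorization ≤ N.factorization :=
      (Nat.factorization_le_iff_dvd hb0 hN).mpr hb
    apply Nat.eq_of_factorization_eq
    · exact Nat.mul_ne_zero (Nat.gcd_ne_zero_left ha0) (Nat.gcd_ne_zero_left hb0)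
    · exact Nat.lcm_ne_zero ha0 hb0
    intro p
    rw [Nat.factorization_mul (Nat.gcd_ne_zero_left ha0) (Nat.gcd_ne_zero_left hb0),
      Finsupp.add_apply,
      Nat.factorization_gcd ha0 h1, Nat.factorization_gcd hb0 h2,
      Nat.factorization_lcm ha0 hb0,
      Finsupp.inf_apply, Finsupp.inf_apply, Finsupp.sup_apply,
      hfac _ (Finset.filter_subset _ _) p, hfac _ (Finset.filter_subset _ _) p]
    have h₁ := hfa p
    have h₂ := hfb p
    by_cases hmem : p ∈ N.primeFactors
    · by_cases hple : P p
      · have hple' : b.factorization p ≤ a.factorization p := hple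
        rw [if_pos (Finset.mem_filter.mpr ⟨hmem, hple⟩),
          if_neg (fun h : p ∈ N.primeFactors.filter (fun p => ¬ P p) =>
            (Finset.mem_filter.mp h).2 hple)]
        omega
      · have hple' : ¬ b.factorization p ≤ a.factorization p := hple
        rw [if_neg (fun h : p ∈ N.primeFactors.filter P =>
            hple (Finset.mem_filter.mp h).2),
          if_pos (Finset.mem_filter.mpr ⟨hmem, hple⟩)]
        omega
    · have hN0 : N.factorization p = 0 := by
        rwa [← Nat.support_factorization, Finsupp.notMem_support_iff] at hmem
      rw [if_neg (fun h => hmem (Finset.filter_subset _ _ h)),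
        if_neg (fun h => hmem (Finset.filter_subset _ _ h))]
      omega

lemma dvd_eq_gcd_mul_gcd {d M₁ M₂ : ℕ} (hco : Nat.Coprime M₁ M₂) (hd : d ∣ M₁ * M₂) :
    d = Nat.gcd d M₁ * Nat.gcd d M₂ := by
  obtain ⟨x, y, hx, hy, rfl⟩ := exists_dvd_and_dvd_of_dvd_mul hd
  apply Nat.dvd_antisymm
  · exact mul_dvd_mul (Nat.dvd_gcd (Dvd.intro y rfl) hx) (Nat.dvd_gcd (Dvd.intro_left x rfl) hy)
  · exact Nat.Coprime.mul_dvd_of_dvd_of_dvd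
      ((hco.coprime_dvd_left (Nat.gcd_dvd_right _ _)).coprime_dvd_right (Nat.gcd_dvd_right _ _))
      (Nat.gcd_dvd_left _ _) (Nat.gcd_dvd_left _ _)

theorem stmt5 (s : ℕ) (hs : 2 ≤ s) (f : Fin s → Polynomial ℤ)
    (hne : ∀ i, f i ≠ 0)
    (hcop : ∀ z : ℂ, ∃ i, Polynomial.aeval z (f i) ≠ 0) :
    ∀ n₁ n₂ : ℤ, ∃ n : ℤ,
      lcm (Finset.univ.gcd fun i => (f i).eval n₁)
          (Finset.univ.gcd fun i => (f i).eval n₂) =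
        Finset.univ.gcd fun i => (f i).eval n := by
  intro n₁ n₂
  obtain ⟨B, r, hB, hsum⟩ := exists_int_combination s (by omega) f hne hcop
  set D : ℤ → ℤ := fun n => Finset.univ.gcd fun i => (f i).eval n with hD
  have hDdvd : ∀ (n : ℤ) (i : Fin s), D n ∣ (f i).eval n :=
    fun n i => Finset.gcd_dvd (Finset.mem_univ i)
  have hdvdB : ∀ n : ℤ, D n ∣ B := by
    intro n
    have hev : (∑ i, r i * f i).eval n = B := by rw [hsum, eval_C]
    rw [Polynomial.eval_finset_sum] at hev
    rw [← hev]
    exact Finset.dvd_sum fun i _ => by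
      rw [Polynomial.eval_mul]; exact ((hDdvd n i).mul_left _)
  have hDnn : ∀ n : ℤ, 0 ≤ D n := fun n =>
    Int.nonneg_of_normalize_eq_self (Finset.normalize_gcd)
  set N := B.natAbs with hNdef
  have hN : N ≠ 0 := Int.natAbs_ne_zero.mpr hB
  have habs : ∀ n : ℤ, (D n).natAbs ∣ N := fun n => Int.natAbs_dvd_natAbs.mpr (hdvdB n)
  obtain ⟨M₁, M₂, hco, hMN, hgl⟩ :=
    coprime_split N (D n₁).natAbs (D n₂).natAbs hN (habs n₁) (habs n₂)
  obtain ⟨u, v, huv⟩ := Nat.isCoprime_iff_coprime.mpr hco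
  refine ⟨n₂ * (u * M₁) + n₁ * (v * M₂), ?_⟩
  set n : ℤ := n₂ * (u * M₁) + n₁ * (v * M₂) with hn
  have h₁ : (M₁ : ℤ) ∣ n - n₁ := ⟨(n₂ - n₁) * u, by rw [hn]; linear_combination n₁ * huv⟩
  have h₂ : (M₂ : ℤ) ∣ n - n₂ := ⟨(n₁ - n₂) * v, by rw [hn]; linear_combination n₂ * huv⟩
  have hK : ∀ (m x y : ℤ), m ∣ x - y → Int.gcd (D x) m = Int.gcd (D y) m := by
    have key : ∀ (m x y : ℤ), m ∣ x - y → ∀ t : ℕ, (t : ℤ) ∣ D x → (t : ℤ) ∣ m →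
        (t : ℤ) ∣ D y := by
      intro m x y hxy t htD htm
      refine Finset.dvd_gcd fun i _ => ?_
      have hd1 : (t : ℤ) ∣ (f i).eval x := htD.trans (hDdvd x i)
      have hd2 : (t : ℤ) ∣ (f i).eval x - (f i).eval y :=
        (htm.trans hxy).trans (Polynomial.sub_dvd_eval_sub x y (f i))
      have := dvd_sub hd1 hd2
      rwa [sub_sub_cancel] at this
    intro m x y hxy
    apply Nat.dvd_antisymm
    · refine Int.natCast_dvd_natCast.mp (Int.dvd_coe_gcd ?_ (Int.gcd_dvd_right _ _))
      exact key m x y hxy _ (Int.gcd_dvd_left _ _) (Int.gcd_dvd_right _ _)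
    · refine Int.natCast_dvd_natCast.mp (Int.dvd_coe_gcd ?_ (Int.gcd_dvd_right _ _))
      refine key m y x ?_ _ (Int.gcd_dvd_left _ _) (Int.gcd_dvd_right _ _)
      rw [show y - x = -(x - y) by ring]
      exact hxy.neg_right
  have hgcdcast : ∀ (z : ℤ) (M : ℕ), Int.gcd z (M : ℤ) = Nat.gcd z.natAbs M := by
    intro z M; rw [Int.gcd_def, Int.natAbs_natCast]
  have g₁ : Nat.gcd (D n).natAbs M₁ = Nat.gcd (D n₁).natAbs M₁ := by
    have := hK (M₁ : ℤ) n n₁ h₁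
    rwa [hgcdcast, hgcdcast] at this
  have g₂ : Nat.gcd (D n).natAbs M₂ = Nat.gcd (D n₂).natAbs M₂ := by
    have := hK (M₂ : ℤ) n n₂ h₂
    rwa [hgcdcast, hgcdcast] at this
  have hd : (D n).natAbs = Nat.lcm (D n₁).natAbs (D n₂).natAbs := by
    have hdn : (D n).natAbs ∣ M₁ * M₂ := hMN ▸ habs n
    rw [dvd_eq_gcd_mul_gcd hco hdn, g₁, g₂, hgl]
  calc lcm (D n₁) (D n₂) = ((Int.lcm (D n₁) (D n₂) : ℕ) : ℤ) := (Int.coe_lcm _ _).symm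
    _ = ((Nat.lcm (D n₁).natAbs (D n₂).natAbs : ℕ) : ℤ) := by rw [Int.lcm_def]
    _ = (((D n).natAbs : ℕ) : ℤ) := by rw [hd]
    _ = D n := Int.natAbs_of_nonneg (hDnn n)
end

section
/- Let f₁,…,f_s ∈ ℤ[x] (s ≥ 2) be nonzero coprime polynomials. Then there exists n ∈ ℤ such that gcd(f₁(n),…,f_s(n)) equals the gcd of all values f_i(m) over all m ∈ ℤ and all i = 1,…,s. In particular this overall gcd is attained as some d_n. -/
open Polynomial

private lemma clear_denom (u : Polynomial ℚ) :
    ∃ k : ℤ, k ≠ 0 ∧ ∃ w : Polynomial ℤ, w.map (Int.castRingHom ℚ) = C (k : ℚ) * u := by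
  induction u using Polynomial.induction_on with
  | C a =>
      refine ⟨(a.den : ℤ), by exact_mod_cast a.den_nz, C a.num, ?_⟩
      rw [map_C, ← C_mul]
      congr 1
      simp only [eq_intCast]
      push_cast
      rw [mul_comm]
      exact (Rat.mul_den_eq_num a).symm
  | add p q hp hq =>
      obtain ⟨k1, hk1, w1, hw1⟩ := hp
      obtain ⟨k2, hk2, w2, hw2⟩ := hq
      refine ⟨k1 * k2, mul_ne_zero hk1 hk2, C k2 * w1 + C k1 * w2, ?_⟩
      simp only [Polynomial.map_add, Polynomial.map_mul, map_C, hw1, hw2,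
        eq_intCast, C_mul, Polynomial.map_intCast]
      push_cast [C_mul]
      simp only [map_intCast (C : ℚ →+* Polynomial ℚ)]
      ring
  | monomial n a hp =>
      obtain ⟨k, hk, w, hw⟩ := hp
      exact ⟨k, hk, w * X, by simp only [Polynomial.map_mul, map_X, hw]; ring⟩

private lemma exists_bezout (s : ℕ) (hs : 2 ≤ s) (f : Fin s → Polynomial ℤ)
    (hne : ∀ i, f i ≠ 0)
    (hcop : ∀ z : ℂ, ∃ i, Polynomial.aeval z (f i) ≠ 0) :
    ∃ N : ℤ, N ≠ 0 ∧ Polynomial.C N ∈ Ideal.span (Set.range f) := by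
  have hmapinj : Function.Injective (Polynomial.map (Int.castRingHom ℚ)) :=
    Polynomial.map_injective _ Int.cast_injective
  set F : Fin s → Polynomial ℚ := fun i => (f i).map (Int.castRingHom ℚ) with hF
  have i0 : Fin s := ⟨0, by omega⟩
  have hspan : Ideal.span (Set.range F) = ⊤ := by
    by_contra h
    obtain ⟨M, hMmax, hle⟩ := Ideal.exists_le_maximal _ h
    obtain ⟨q, hq⟩ := (IsPrincipalIdealRing.principal M).principal
    have hqdvd : ∀ i, q ∣ F i := by
      intro i
      have : F i ∈ M := hle (Ideal.subset_span ⟨i, rfl⟩)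
      rw [hq, Ideal.submodule_span_eq, Ideal.mem_span_singleton] at this
      exact this
    have hq0 : q ≠ 0 := by
      rintro rfl
      have := hqdvd i0
      simp only [zero_dvd_iff] at this
      exact hne i0 (hmapinj (by simpa [hF] using this))
    have hqu : ¬ IsUnit q := by
      intro hu
      have : M = ⊤ := by
        rw [hq, Ideal.submodule_span_eq, Ideal.span_singleton_eq_top.mpr hu]
      exact hMmax.ne_top this
    have hdeg : 0 < q.degree := by
      rcases lt_or_ge 0 q.degree with h | h
      · exact h
      · exact absurd (Polynomial.isUnit_iff_degree_eq_zero.mpr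
          (le_antisymm h (Polynomial.zero_le_degree_iff.mpr hq0))) hqu
    have hdeg' : 0 < (q.map (algebraMap ℚ ℂ)).degree := by
      rwa [Polynomial.degree_map_eq_of_injective (algebraMap ℚ ℂ).injective]
    obtain ⟨z, hz⟩ := Complex.exists_root hdeg'
    obtain ⟨i, hi⟩ := hcop z
    apply hi
    have hdvd : q.map (algebraMap ℚ ℂ) ∣ (F i).map (algebraMap ℚ ℂ) :=
      Polynomial.map_dvd _ (hqdvd i)
    have hroot : ((F i).map (algebraMap ℚ ℂ)).eval z = 0 := by
      obtain ⟨t, ht⟩ := hdvd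
      rw [ht, eval_mul, show eval z (q.map (algebraMap ℚ ℂ)) = 0 from hz, zero_mul]
    -- aeval z (f i) = eval of double map
    have : (Polynomial.aeval z) (f i) = ((F i).map (algebraMap ℚ ℂ)).eval z := by
      rw [hF]
      simp only [Polynomial.map_map]
      rw [Polynomial.aeval_def, Polynomial.eval₂_eq_eval_map]
      congr 1
    rw [this, hroot]
  -- get combination
  have h1 : (1 : Polynomial ℚ) ∈ Ideal.span (Set.range F) := by
    rw [hspan]; exact Submodule.mem_top
  rw [Ideal.span, Submodule.mem_span_range_iff_exists_fun] at h1
  obtain ⟨u, hu⟩ := h1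
  choose k hk w hw using fun i => clear_denom (u i)
  set K : ℤ := ∏ i, k i with hK
  have hK0 : K ≠ 0 := Finset.prod_ne_zero_iff.mpr fun i _ => hk i
  set W : Fin s → Polynomial ℤ := fun i => C (∏ j ∈ Finset.univ.erase i, k j) * w i with hW
  have hmain : (∑ i, W i * f i) = C K := by
    apply hmapinj
    rw [Polynomial.map_sum, Polynomial.map_C]
    have hterm : ∀ i : Fin s, (W i * f i).map (Int.castRingHom ℚ) = C (K : ℚ) * (u i • F i) := by
      intro i
      have hC : (Int.castRingHom ℚ) (∏ j ∈ Finset.univ.erase i, k j) * ((k i : ℤ) : ℚ)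
          = ((K : ℤ) : ℚ) := by
        rw [eq_intCast, hK]
        exact_mod_cast congrArg (fun t : ℤ => (t : ℚ))
          (Finset.prod_erase_mul Finset.univ k (Finset.mem_univ i))
      rw [hW]
      simp only [Polynomial.map_mul, Polynomial.map_C, hw, smul_eq_mul]
      rw [← mul_assoc, ← C_mul, hC, hF]
      ring
    simp only [hterm]
    rw [← Finset.mul_sum, hu, mul_one]
    norm_cast
  exact ⟨K, hK0, hmain ▸ Ideal.sum_mem _ fun i _ =>
    Ideal.mul_mem_left _ _ (Ideal.subset_span ⟨i, rfl⟩)⟩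

private lemma core_gcd (NN : ℕ) (hNN : NN ≠ 0) (D : ℤ → ℕ) (hD0 : ∀ n, D n ≠ 0)
    (hDN : ∀ n, D n ∣ NN)
    (hcong : ∀ (t : ℕ) (r n : ℤ), (t : ℤ) ∣ r - n → t ∣ D r → t ∣ D n)
    (n m : ℤ) : ∃ r : ℤ, D r ∣ Nat.gcd (D n) (D m) := by
  set g := Nat.gcd (D n) (D m) with hgdef
  have hg0 : g ≠ 0 := fun h => hD0 n (Nat.eq_zero_of_gcd_eq_zero_left h)
  set a := D n / g with hadef
  have hga : g * a = D n := Nat.mul_div_cancel' (Nat.gcd_dvd_left _ _)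
  have ha0 : a ≠ 0 := fun h => hD0 n (by rw [← hga, h, mul_zero])
  set K := NN * NN with hKdef
  have hNP : NN ^ NN ≠ 0 := pow_ne_zero _ hNN
  have haK : a ^ K ≠ 0 := pow_ne_zero _ ha0
  set c := NN ^ NN / Nat.gcd (NN ^ NN) (a ^ K) with hcdef
  have hgd : Nat.gcd (NN ^ NN) (a ^ K) ∣ NN ^ NN := Nat.gcd_dvd_left _ _
  have hcmul : c * Nat.gcd (NN ^ NN) (a ^ K) = NN ^ NN := Nat.div_mul_cancel hgd
  have hc0 : c ≠ 0 := by
    intro h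
    rw [h, zero_mul] at hcmul
    exact hNP hcmul.symm
  -- factorization of c
  have hcfac : ∀ p : ℕ, c.factorization p =
      NN * NN.factorization p - min (NN * NN.factorization p) (K * a.factorization p) := by
    intro p
    rw [hcdef, Nat.factorization_div hgd, Nat.factorization_gcd hNP haK,
      Nat.factorization_pow, Nat.factorization_pow]
    simp [Finsupp.inf_apply]
  -- for p dividing N but not a, big powers of p divide c
  have hpc : ∀ p t : ℕ, p.Prime → p ^ t ∣ NN → ¬ p ∣ a → p ^ t ∣ c := by
    intro p t pp ht hpa
    rcases Nat.eq_zero_or_pos t with rfl | htpos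
    · simp
    have hpN : p ∣ NN := dvd_trans (dvd_pow_self p htpos.ne') ht
    have h1 : 1 ≤ NN.factorization p := (pp.factorization_pos_of_dvd hNN hpN)
    have ht' : t ≤ NN.factorization p := (pp.pow_dvd_iff_le_factorization hNN).mp ht
    have hfa : a.factorization p = 0 := Nat.factorization_eq_zero_of_not_dvd hpa
    rw [pp.pow_dvd_iff_le_factorization hc0, hcfac, hfa, mul_zero,
      min_eq_right (Nat.zero_le _), Nat.sub_zero]
    calc t ≤ NN.factorization p := ht'
      _ ≤ NN * NN.factorization p := Nat.le_mul_of_pos_left _ (Nat.pos_of_ne_zero hNN)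
  -- c is coprime to a ^ K
  have hcop : Nat.Coprime c (a ^ K) := by
    rw [Nat.coprime_iff_gcd_eq_one]
    by_contra hne1
    obtain ⟨p, pp, hp⟩ := Nat.exists_prime_and_dvd hne1
    have hpc' : p ∣ c := hp.trans (Nat.gcd_dvd_left _ _)
    have hpa : p ∣ a := pp.dvd_of_dvd_pow (hp.trans (Nat.gcd_dvd_right _ _))
    have h1 : 1 ≤ a.factorization p := pp.factorization_pos_of_dvd ha0 hpa
    have hcp0 : c.factorization p = 0 := by
      rw [hcfac]
      have : NN * NN.factorization p ≤ K * a.factorization p := by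
        calc NN * NN.factorization p ≤ NN * NN := by
              exact Nat.mul_le_mul_left _ (le_of_lt (Nat.factorization_lt p hNN))
          _ = K := hKdef.symm
          _ ≤ K * a.factorization p := Nat.le_mul_of_pos_right _ h1
      rw [min_eq_left this, Nat.sub_self]
    have : 1 ≤ c.factorization p := pp.factorization_pos_of_dvd hc0 hpc'
    omega
  -- CRT
  have hicop : IsCoprime (c : ℤ) ((a ^ K : ℕ) : ℤ) := by
    rw [Int.isCoprime_iff_gcd_eq_one]
    exact_mod_cast hcop
  obtain ⟨u, v, huv⟩ := hicop
  set r : ℤ := m * (u * (c : ℤ)) + n * (v * ((a ^ K : ℕ) : ℤ)) with hrdef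
  have hrn : (c : ℤ) ∣ r - n := ⟨(m - n) * u, by linear_combination n * huv⟩
  have hrm : ((a ^ K : ℕ) : ℤ) ∣ r - m := ⟨(n - m) * v, by linear_combination m * huv⟩
  refine ⟨r, ?_⟩
  rw [← Nat.factorization_le_iff_dvd (hD0 r) hg0, Finsupp.le_def]
  intro p
  by_cases pp : p.Prime
  swap
  · simp [Nat.factorization_eq_zero_of_not_prime _ pp]
  set t := (D r).factorization p with htdef
  have hpt : p ^ t ∣ D r := Nat.ordProj_dvd _ _
  have htN : t ≤ NN.factorization p := by
    have := (Nat.factorization_le_iff_dvd (hD0 r) hNN).mpr (hDN r)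
    exact this p
  have hgfac : g.factorization p = min ((D n).factorization p) ((D m).factorization p) := by
    rw [hgdef, Nat.factorization_gcd (hD0 n) (hD0 m)]
    simp [Finsupp.inf_apply]
  have hDna : (D n).factorization p = g.factorization p + a.factorization p := by
    rw [← hga, Nat.factorization_mul hg0 ha0]
    simp
  by_cases hpa : p ∣ a
  · -- p divides a : use congruence at m
    have hfa1 : 1 ≤ a.factorization p := pp.factorization_pos_of_dvd ha0 hpa
    have htaK : p ^ t ∣ a ^ K := by
      rw [pp.pow_dvd_iff_le_factorization haK, Nat.factorization_pow, Finsupp.smul_apply,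
        smul_eq_mul]
      calc t ≤ NN.factorization p := htN
        _ ≤ NN := le_of_lt (Nat.factorization_lt p hNN)
        _ ≤ K := by rw [hKdef]; exact Nat.le_mul_of_pos_right _ (Nat.pos_of_ne_zero hNN)
        _ ≤ K * a.factorization p := Nat.le_mul_of_pos_right _ hfa1
    have hDm : p ^ t ∣ D m := hcong _ r m (dvd_trans (by exact_mod_cast htaK) hrm) hpt
    have htm : t ≤ (D m).factorization p :=
      (pp.pow_dvd_iff_le_factorization (hD0 m)).mp hDm
    rw [hgfac]
    have : (D m).factorization p ≤ (D n).factorization p := by omega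
    omega
  · -- p does not divide a : use congruence at n
    have hfa : a.factorization p = 0 := Nat.factorization_eq_zero_of_not_dvd hpa
    have hptc : p ^ t ∣ c := hpc p t pp (hpt.trans (hDN r)) hpa
    have hDn' : p ^ t ∣ D n := hcong _ r n (dvd_trans (by exact_mod_cast hptc) hrn) hpt
    have htn : t ≤ (D n).factorization p :=
      (pp.pow_dvd_iff_le_factorization (hD0 n)).mp hDn'
    rw [hgfac]
    omega

theorem stmt6 (s : ℕ) (hs : 2 ≤ s) (f : Fin s → Polynomial ℤ)
    (hne : ∀ i, f i ≠ 0)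
    (hcop : ∀ z : ℂ, ∃ i, Polynomial.aeval z (f i) ≠ 0) :
    ∃ n : ℤ,
      (∀ (m : ℤ) (i : Fin s),
        (Finset.univ.gcd fun j => (f j).eval n) ∣ (f i).eval m) ∧
      (∀ k : ℤ, (∀ (m : ℤ) (i : Fin s), k ∣ (f i).eval m) →
        k ∣ Finset.univ.gcd fun j => (f j).eval n) := by
  classical
  set G : ℤ → ℤ := fun n => Finset.univ.gcd fun j => (f j).eval n with hGdef
  set D : ℤ → ℕ := fun n => (G n).natAbs with hDdef
  have hGdvd : ∀ (n : ℤ) (i : Fin s), G n ∣ (f i).eval n :=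
    fun n i => Finset.gcd_dvd (Finset.mem_univ i)
  have hDdvd : ∀ (n : ℤ) (i : Fin s), ((D n : ℤ)) ∣ (f i).eval n :=
    fun n i => Int.natAbs_dvd.mpr (hGdvd n i)
  -- D n ≠ 0
  have hD0 : ∀ n, D n ≠ 0 := by
    intro n h
    have hG0 : G n = 0 := Int.natAbs_eq_zero.mp h
    obtain ⟨i, hi⟩ := hcop (n : ℂ)
    apply hi
    have hev : (f i).eval n = 0 := by
      have := Finset.gcd_eq_zero_iff.mp (hGdef ▸ hG0) i (Finset.mem_univ i)
      exact this
    have : (Polynomial.aeval ((n : ℤ) : ℂ)) (f i) = (((f i).eval n : ℤ) : ℂ) := by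
      rw [Polynomial.aeval_def, Polynomial.eval₂_eq_eval_map]
      have := Polynomial.eval_intCast_map (algebraMap ℤ ℂ) (f i) n
      simpa using this
    rw [this, hev]
    simp
  -- the big common bound
  obtain ⟨N, hN0, hNmem⟩ := exists_bezout s hs f hne hcop
  set NN : ℕ := N.natAbs with hNNdef
  have hNN : NN ≠ 0 := fun h => hN0 (Int.natAbs_eq_zero.mp h)
  have hDN : ∀ n, D n ∣ NN := by
    intro n
    rw [Ideal.span, Submodule.mem_span_range_iff_exists_fun] at hNmem
    obtain ⟨cc, hcc⟩ := hNmem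
    have hGN : G n ∣ N := by
      have : N = ∑ i, (cc i).eval n * (f i).eval n := by
        have := congrArg (Polynomial.eval n) hcc
        simpa [Polynomial.eval_finset_sum] using this.symm
      rw [this]
      exact Finset.dvd_sum fun i _ => Dvd.dvd.mul_left (hGdvd n i) _
    exact Int.natAbs_dvd_natAbs.mpr hGN
  -- congruence property
  have hcong : ∀ (t : ℕ) (r n : ℤ), (t : ℤ) ∣ r - n → t ∣ D r → t ∣ D n := by
    intro t r n hdvd hDr
    have hall : ∀ i, (t : ℤ) ∣ (f i).eval n := by
      intro i
      have h1 : (t : ℤ) ∣ (f i).eval r :=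
        dvd_trans (Int.natCast_dvd_natCast.mpr hDr) (hDdvd r i)
      have h2 : (t : ℤ) ∣ (f i).eval r - (f i).eval n :=
        dvd_trans hdvd (Polynomial.sub_dvd_eval_sub r n (f i))
      have := dvd_sub h1 h2
      simpa using this
    have hGn : (t : ℤ) ∣ G n := Finset.dvd_gcd fun i _ => hall i
    exact Int.natCast_dvd_natCast.mp (Int.dvd_natAbs.mpr hGn)
  -- pick n with minimal value of D
  have hex : ∃ v : ℕ, ∃ n : ℤ, D n = v := ⟨D 0, 0, rfl⟩
  obtain ⟨n, hn⟩ := Nat.find_spec hex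
  have hmin : ∀ m : ℤ, D n ∣ D m := by
    intro m
    by_contra hm
    obtain ⟨r, hr⟩ := core_gcd NN hNN D hD0 hDN hcong n m
    have hgltn : Nat.gcd (D n) (D m) < D n := by
      rcases lt_or_eq_of_le (Nat.le_of_dvd (Nat.pos_of_ne_zero (hD0 n))
        (Nat.gcd_dvd_left (D n) (D m))) with h | h
      · exact h
      · exact absurd (h ▸ Nat.gcd_dvd_right (D n) (D m)) hm
    have hrlt : D r < Nat.find hex := by
      have h1 : D r ≤ Nat.gcd (D n) (D m) :=
        Nat.le_of_dvd (Nat.gcd_pos_of_pos_left _ (Nat.pos_of_ne_zero (hD0 n))) hr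
      omega
    exact Nat.find_min hex hrlt ⟨r, rfl⟩
  refine ⟨n, ?_, ?_⟩
  · intro m i
    have h1 : ((D n : ℤ)) ∣ (f i).eval m :=
      dvd_trans (Int.natCast_dvd_natCast.mpr (hmin m)) (hDdvd m i)
    exact dvd_trans (Int.dvd_natAbs.mpr dvd_rfl) h1
  · intro k hk
    exact Finset.dvd_gcd fun i _ => hk n i
end

section
/- Let f₁,…,f_s ∈ ℤ[x] (s ≥ 2) be nonzero coprime polynomials such that no prime number p divides all of f₁(n),…,f_s(n) for every n ∈ ℤ. Then there exist infinitely many integers n such that f₁(n),…,f_s(n) are coprime integers (their gcd is 1). -/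
open Polynomial

open Polynomial

lemma crt7 (P : Finset ℕ) (hP : ∀ p ∈ P, p.Prime) (r : ℕ → ℤ) :
    ∃ n : ℤ, ∀ p ∈ P, (p : ℤ) ∣ n - r p := by
  classical
  induction P using Finset.induction_on with
  | empty => exact ⟨0, by simp⟩
  | @insert q P hq ih =>
    obtain ⟨n, hn⟩ := ih (fun p hp => hP p (Finset.mem_insert_of_mem hp))
    have hqp : q.Prime := hP q (Finset.mem_insert_self q P)
    have hcop : IsCoprime (q : ℤ) (∏ p ∈ P, (p : ℤ)) := by
      apply IsCoprime.prod_right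
      intro p hp
      have hpp : p.Prime := hP p (Finset.mem_insert_of_mem hp)
      have : q ≠ p := fun h => hq (h ▸ hp)
      rw [Int.isCoprime_iff_gcd_eq_one, Int.gcd_natCast_natCast]
      exact (Nat.coprime_primes hqp hpp).mpr this
    obtain ⟨u, v, huv⟩ := hcop
    refine ⟨r q * v * (∏ p ∈ P, (p : ℤ)) + n * u * q, ?_⟩
    intro p hp
    rcases Finset.mem_insert.mp hp with h | h
    · subst h
      have : r p * v * (∏ p ∈ P, (p : ℤ)) + n * u * p - r p
          = (n - r p) * u * p := by linear_combination r p * huv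
      rw [this]
      exact Dvd.intro_left _ rfl
    · have h1 : (p : ℤ) ∣ ∏ p ∈ P, (p : ℤ) :=
        Finset.dvd_prod_of_mem _ h
      have h2 : (p : ℤ) ∣ n - r p := hn p h
      have : r q * v * (∏ p ∈ P, (p : ℤ)) + n * u * q - r p
          = (r q * v - n * v) * (∏ p ∈ P, (p : ℤ)) + (n - r p) := by
        linear_combination n * huv
      rw [this]
      exact dvd_add (h1.mul_left _) h2

open Polynomial

lemma bezout7 (s : ℕ) (hs : 2 ≤ s) (f : Fin s → Polynomial ℤ)
    (hne : ∀ i, f i ≠ 0)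
    (hcop : ∀ z : ℂ, ∃ i, Polynomial.aeval z (f i) ≠ 0) :
    ∃ (N : ℤ) (B : Fin s → Polynomial ℤ), N ≠ 0 ∧ ∑ i, B i * f i = C N := by
  classical
  have hφ : Function.Injective (algebraMap ℤ ℚ) := fun a b h => by
    exact_mod_cast h
  set F : Fin s → ℚ[X] := fun i => (f i).map (algebraMap ℤ ℚ) with hF
  have hFne : ∀ i, F i ≠ 0 := fun i =>
    (Polynomial.map_ne_zero_iff hφ).mpr (hne i)
  set I : Ideal ℚ[X] := Ideal.span (Set.range F) with hI
  have hmem : ∀ i, F i ∈ I := fun i => Ideal.subset_span (Set.mem_range_self i)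
  have htop : I = ⊤ := by
    obtain ⟨g, hg⟩ := Submodule.IsPrincipal.principal I
    have hdvd : ∀ i, g ∣ F i := fun i => by
      have h := hmem i
      rw [hg] at h
      exact (Ideal.mem_span_singleton).mp h
    have i0 : Fin s := ⟨0, by omega⟩
    have hg0 : g ≠ 0 := by
      rintro rfl
      exact hFne i0 (zero_dvd_iff.mp (hdvd i0))
    have hgu : IsUnit g := by
      by_contra hgu
      have hdeg : g.degree ≠ 0 := fun h =>
        hgu (Polynomial.isUnit_iff_degree_eq_zero.mpr h)
      have hdeg' : (g.map (algebraMap ℚ ℂ)).degree ≠ 0 := by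
        rwa [Polynomial.degree_map_eq_of_injective (algebraMap ℚ ℂ).injective]
      have hdegpos : 0 < (g.map (algebraMap ℚ ℂ)).degree := by
        rcases lt_or_eq_of_le (Polynomial.zero_le_degree_iff.mpr
          ((Polynomial.map_ne_zero_iff (algebraMap ℚ ℂ).injective).mpr hg0)) with h | h
        · exact h
        · exact absurd h.symm hdeg'
      obtain ⟨z, hz⟩ := Complex.exists_root hdegpos
      · obtain ⟨i, hi⟩ := hcop z
        apply hi
        have h1 : (F i).map (algebraMap ℚ ℂ) = (f i).map (algebraMap ℤ ℂ) := by
          rw [hF]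
          simp only [Polynomial.map_map]
          congr 1
        have h2 : g.map (algebraMap ℚ ℂ) ∣ (f i).map (algebraMap ℤ ℂ) := by
          rw [← h1]
          exact Polynomial.map_dvd _ (hdvd i)
        have h3 : ((f i).map (algebraMap ℤ ℂ)).eval z = 0 := by
          obtain ⟨c, hc⟩ := h2
          rw [hc, Polynomial.eval_mul, hz.eq_zero, zero_mul]
        have h4 : Polynomial.aeval z (f i) = ((f i).map (algebraMap ℤ ℂ)).eval z := by
          rw [Polynomial.aeval_def, Polynomial.eval_map]
        rw [h4]
        exact h3
    rw [hg]
    exact (Ideal.span_singleton_eq_top).mpr hgu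
  have hone : (1 : ℚ[X]) ∈ I := htop ▸ Submodule.mem_top
  obtain ⟨c, hc⟩ := (Ideal.mem_span_range_iff_exists_fun).mp hone
  -- clear denominators
  choose m hm using fun i =>
    IsLocalization.integerNormalization_map_to_map (nonZeroDivisors ℤ) (c i)
  set N : ℤ := ∏ i, (m i : ℤ) with hN
  have hNne : N ≠ 0 := by
    apply Finset.prod_ne_zero_iff.mpr
    intro i _
    exact nonZeroDivisors.coe_ne_zero (m i)
  refine ⟨N, fun i => C (∏ j ∈ Finset.univ.erase i, (m j : ℤ)) *
    IsLocalization.integerNormalization (nonZeroDivisors ℤ) (c i), hNne, ?_⟩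
  apply Polynomial.map_injective _ hφ
  rw [Polynomial.map_sum, Polynomial.map_C]
  have : ∀ i : Fin s,
      (C (∏ j ∈ Finset.univ.erase i, (m j : ℤ)) *
        IsLocalization.integerNormalization (nonZeroDivisors ℤ) (c i) * f i).map
        (algebraMap ℤ ℚ)
      = C ((N : ℚ)) * (c i * F i) := by
    intro i
    rw [Polynomial.map_mul, Polynomial.map_mul, Polynomial.map_C, hm i]
    have hsmul : ((m i : ℤ) • c i) = C ((m i : ℤ) : ℚ) * c i := by
      rw [← Polynomial.smul_eq_C_mul]
      exact (Int.cast_smul_eq_zsmul ℚ _ _).symm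
    have key : (∏ j ∈ Finset.univ.erase i, (m j : ℤ)) * (m i : ℤ) = N :=
      Finset.prod_erase_mul _ _ (Finset.mem_univ i)
    rw [hsmul, ← mul_assoc, ← mul_assoc, ← Polynomial.C_mul]
    simp only [algebraMap_int_eq, eq_intCast]
    rw [← Int.cast_mul, key, mul_assoc]
    simp only [hF, algebraMap_int_eq]
    ring
  rw [Finset.sum_congr rfl (fun i _ => this i), ← Finset.mul_sum, hc, mul_one]
  simp

theorem stmt7 (s : ℕ) (hs : 2 ≤ s) (f : Fin s → Polynomial ℤ)
    (hne : ∀ i, f i ≠ 0)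
    (hcop : ∀ z : ℂ, ∃ i, Polynomial.aeval z (f i) ≠ 0)
    (hp : ∀ p : ℕ, p.Prime → ∃ (n : ℤ) (i : Fin s), ¬ ((p : ℤ) ∣ (f i).eval n)) :
    Set.Infinite {n : ℤ | (Finset.univ.gcd fun i => (f i).eval n) = 1} := by
  classical
  obtain ⟨N, B, hNne, hB⟩ := bezout7 s hs f hne hcop
  -- gcd of values divides N
  have hgcdN : ∀ n : ℤ, (Finset.univ.gcd fun i => (f i).eval n) ∣ N := by
    intro n
    have : (∑ i, B i * f i).eval n = N := by rw [hB, Polynomial.eval_C]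
    rw [← this, Polynomial.eval_finset_sum]
    apply Finset.dvd_sum
    intro i _
    rw [Polynomial.eval_mul]
    exact Dvd.dvd.mul_left (Finset.gcd_dvd (Finset.mem_univ i)) _
  -- pick residues
  set r : ℕ → ℤ := fun p => if h : p.Prime then (hp p h).choose else 0 with hr
  have hrspec : ∀ p : ℕ, (h : p.Prime) → ∃ i, ¬ ((p : ℤ) ∣ (f i).eval (r p)) := by
    intro p h
    rw [hr]
    simp only [dif_pos h]
    exact (hp p h).choose_spec
  set P : Finset ℕ := N.natAbs.primeFactors with hP
  obtain ⟨n₀, hn₀⟩ := crt7 P (fun p hp' => Nat.prime_of_mem_primeFactors hp') r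
  set M : ℕ := ∏ p ∈ P, p with hM
  have hMpos : 0 < M := Finset.prod_pos fun p hp' =>
    (Nat.prime_of_mem_primeFactors hp').pos
  apply Set.infinite_of_injective_forall_mem
    (f := fun k : ℤ => n₀ + (M : ℤ) * k)
  · intro a b hab
    simp only [add_right_inj] at hab
    exact mul_left_cancel₀ (by exact_mod_cast hMpos.ne') hab
  · intro k
    set n : ℤ := n₀ + (M : ℤ) * k with hn
    set d : ℤ := Finset.univ.gcd fun i => (f i).eval n with hd
    show d = 1
    have hdN : d ∣ N := hgcdN n
    have hd0 : d ≠ 0 := by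
      rintro h
      rw [h] at hdN
      exact hNne (zero_dvd_iff.mp hdN)
    have hdnn : 0 ≤ d := by
      have := Finset.normalize_gcd (s := (Finset.univ : Finset (Fin s)))
        (f := fun i => (f i).eval n)
      rw [← hd] at this
      have h6 : |d| = d := by rw [Int.abs_eq_normalize, this]
      rw [← h6]
      exact abs_nonneg d
    by_contra hd1
    have hd2 : d.natAbs ≠ 1 := by
      intro h
      rcases Int.natAbs_eq_iff.mp h with h' | h'
      · exact hd1 (by simpa using h')
      · rw [h'] at hdnn; norm_num at hdnn
    obtain ⟨p, hpp, hpd⟩ := Nat.exists_prime_and_dvd hd2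
    have hpdZ : (p : ℤ) ∣ d := Int.dvd_natAbs.mp (Int.natCast_dvd_natCast.mpr hpd)
    have hpN : (p : ℤ) ∣ N := hpdZ.trans hdN
    have hpP : p ∈ P := by
      rw [hP, Nat.mem_primeFactors]
      exact ⟨hpp, Int.natCast_dvd_natCast.mp (Int.dvd_natAbs.mpr hpN),
        Int.natAbs_ne_zero.mpr hNne⟩
    obtain ⟨i, hi⟩ := hrspec p hpp
    apply hi
    have h1 : (p : ℤ) ∣ n - r p := by
      have h2 : (p : ℤ) ∣ (M : ℤ) :=
        Int.natCast_dvd_natCast.mpr (Finset.dvd_prod_of_mem _ hpP)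
      have h3 : n - r p = (n₀ - r p) + (M : ℤ) * k := by rw [hn]; ring
      rw [h3]
      exact dvd_add (hn₀ p hpP) (Dvd.dvd.mul_right h2 k)
    have h4 : (p : ℤ) ∣ (f i).eval n - (f i).eval (r p) :=
      dvd_trans h1 (Polynomial.sub_dvd_eval_sub _ _ _)
    have h5 : (p : ℤ) ∣ (f i).eval n :=
      hpdZ.trans (Finset.gcd_dvd (Finset.mem_univ i))
    have := dvd_sub h5 h4
    simpa using this
end

section
/- Let f₁, f₂ ∈ ℤ[x] be nonzero coprime polynomials with f₂ nonconstant, such that no prime divides both f₁(n) and f₂(n) for every n ∈ ℤ. Then for infinitely many n ∈ ℤ, there exist infinitely many ℓ ∈ ℤ such that f₁(n) + ℓ·f₂(n) is a prime number. -/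
open Polynomial

lemma combo (f₁ f₂ : Polynomial ℤ)
    (hcop : ∀ z : ℂ, Polynomial.aeval z f₁ ≠ 0 ∨ Polynomial.aeval z f₂ ≠ 0) :
    ∃ (u v : Polynomial ℤ) (c : ℤ), c ≠ 0 ∧
      ∀ n : ℤ, u.eval n * f₁.eval n + v.eval n * f₂.eval n = c := by
  have hQ : IsCoprime (f₁.map (algebraMap ℤ ℚ)) (f₂.map (algebraMap ℤ ℚ)) := by
    refine (Polynomial.isCoprime_iff_aeval_ne_zero_of_isAlgClosed ℚ ℂ _ _).mpr ?_
    intro z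
    rw [Polynomial.aeval_map_algebraMap, Polynomial.aeval_map_algebraMap]
    exact hcop z
  obtain ⟨a, b, hab⟩ := hQ
  obtain ⟨da, hda⟩ := IsLocalization.integerNormalization_map_to_map (nonZeroDivisors ℤ) a
  obtain ⟨db, hdb⟩ := IsLocalization.integerNormalization_map_to_map (nonZeroDivisors ℤ) b
  set A := IsLocalization.integerNormalization (nonZeroDivisors ℤ) a
  set B := IsLocalization.integerNormalization (nonZeroDivisors ℤ) b
  refine ⟨C (db : ℤ) * A, C (da : ℤ) * B, (da : ℤ) * db,
    mul_ne_zero (nonZeroDivisors.coe_ne_zero da) (nonZeroDivisors.coe_ne_zero db), ?_⟩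
  have hinj : Function.Injective (algebraMap ℤ ℚ) := fun x y h => by exact_mod_cast h
  have key : C (db : ℤ) * A * f₁ + C (da : ℤ) * B * f₂ = C ((da : ℤ) * db) := by
    apply Polynomial.map_injective _ hinj
    simp only [Polynomial.map_add, Polynomial.map_mul, Polynomial.map_C, hda, hdb,
      zsmul_eq_mul, eq_intCast, map_intCast, Polynomial.map_intCast]
    push_cast
    linear_combination (((da : ℤ) : ℚ[X]) * ((db : ℤ) : ℚ[X])) * hab
  intro n
  have h := congrArg (Polynomial.eval n) key
  simpa only [eval_add, eval_mul, eval_C] using h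

lemma eval_dvd_congr (d a b : ℤ) (f : Polynomial ℤ) (h : d ∣ a - b) :
    (d ∣ f.eval a ↔ d ∣ f.eval b) := by
  have h2 : d ∣ f.eval a - f.eval b := h.trans (Polynomial.sub_dvd_eval_sub a b f)
  constructor
  · intro hx; simpa using hx.sub h2
  · intro hx; simpa using h2.add hx

lemma crt (f₁ f₂ : Polynomial ℤ)
    (hp : ∀ p : ℕ, p.Prime → ∃ n : ℤ, ¬ ((p : ℤ) ∣ f₁.eval n) ∨ ¬ ((p : ℤ) ∣ f₂.eval n)) :
    ∀ S : Finset ℕ, (∀ p ∈ S, p.Prime) →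
    ∃ n : ℤ, ∀ p ∈ S, ¬ ((p : ℤ) ∣ f₁.eval n) ∨ ¬ ((p : ℤ) ∣ f₂.eval n) := by
  intro S
  induction S using Finset.induction_on with
  | empty => exact fun _ => ⟨0, by simp⟩
  | @insert a s ha ih =>
    intro hprime
    obtain ⟨n, hn⟩ := ih (fun p hp' => hprime p (Finset.mem_insert_of_mem hp'))
    have hqprime := hprime a (Finset.mem_insert_self a s)
    obtain ⟨nq, hnq⟩ := hp a hqprime
    set m : ℤ := ((∏ p ∈ s, p : ℕ) : ℤ) with hm
    have hcop : IsCoprime ((a : ℕ) : ℤ) m := by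
      rw [hm, Nat.isCoprime_iff_coprime]
      exact Nat.Coprime.prod_right fun p hp' =>
        (Nat.coprime_primes hqprime (hprime p (Finset.mem_insert_of_mem hp'))).mpr
          (fun h => ha (h ▸ hp'))
    obtain ⟨x, y, hxy⟩ := hcop
    refine ⟨n * x * a + nq * y * m, ?_⟩
    intro p hps
    rcases Finset.mem_insert.mp hps with rfl | hps'
    · have key : (n * x * (p : ℤ) + nq * y * m) - nq = ((n - nq) * x) * p := by
        linear_combination nq * hxy
      have hdvd : (p : ℤ) ∣ (n * x * (p : ℤ) + nq * y * m) - nq := by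
        rw [key]; exact Dvd.dvd.mul_left dvd_rfl _
      rcases hnq with h | h
      · left; rwa [eval_dvd_congr _ _ _ _ hdvd]
      · right; rwa [eval_dvd_congr _ _ _ _ hdvd]
    · have hpm : (p : ℤ) ∣ m := by
        rw [hm]; exact_mod_cast Finset.dvd_prod_of_mem _ hps'
      have key : (n * x * (a : ℤ) + nq * y * m) - n = ((nq - n) * y) * m := by
        linear_combination n * hxy
      have hdvd : (p : ℤ) ∣ (n * x * (a : ℤ) + nq * y * m) - n := by
        rw [key]; exact hpm.mul_left _
      rcases hn p hps' with h | h
      · left; rwa [eval_dvd_congr _ _ _ _ hdvd]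
      · right; rwa [eval_dvd_congr _ _ _ _ hdvd]

lemma inner_inf (f₁ f₂ : Polynomial ℤ) (n : ℤ) (hd : f₂.eval n ≠ 0)
    (hcp : IsCoprime (f₁.eval n) (f₂.eval n)) :
    Set.Infinite {ℓ : ℤ | ∃ p : ℕ, p.Prime ∧ f₁.eval n + ℓ * f₂.eval n = (p : ℤ)} := by
  set d := f₂.eval n with hdd
  set a := f₁.eval n with haa
  set q := d.natAbs with hq
  haveI : NeZero q := ⟨Int.natAbs_ne_zero.mpr hd⟩
  have hqd : ((q : ℤ)) ∣ d := Int.natAbs_dvd.mpr dvd_rfl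
  have hunit : IsUnit ((a : ZMod q)) := by
    obtain ⟨x, y, hxy⟩ := hcp
    have hd0 : ((d : ZMod q)) = 0 := (ZMod.intCast_zmod_eq_zero_iff_dvd d q).mpr hqd
    have h1 : ((x : ZMod q)) * (a : ZMod q) = 1 := by
      have := congrArg (Int.cast : ℤ → ZMod q) hxy
      push_cast at this
      rwa [hd0, mul_zero, add_zero] at this
    exact IsUnit.of_mul_eq_one _ (by rw [mul_comm]; exact h1)
  have hDir := Nat.infinite_setOfPred_prime_and_eq_mod (q := q) (a := (a : ZMod q)) hunit
  set φ : ℕ → ℤ := fun p => ((p : ℤ) - a) / d with hφ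
  have key : ∀ p ∈ {p : ℕ | p.Prime ∧ ((p : ZMod q)) = (a : ZMod q)},
      a + φ p * d = (p : ℤ) := by
    intro p hp
    have hmod : ((p : ℤ) : ZMod q) = (a : ZMod q) := by exact_mod_cast hp.2
    have h1 : (q : ℤ) ∣ (p : ℤ) - a :=
      dvd_sub_comm.mp ((ZMod.intCast_eq_intCast_iff _ _ _).mp hmod).dvd
    have hddvd : d ∣ (p : ℤ) - a := Int.natAbs_dvd.mp h1
    show a + ((p : ℤ) - a) / d * d = (p : ℤ)
    rw [Int.ediv_mul_cancel hddvd]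
    ring
  apply Set.Infinite.mono (s := φ '' {p : ℕ | p.Prime ∧ ((p : ZMod q)) = (a : ZMod q)})
  · rintro ℓ ⟨p, hp, rfl⟩
    exact ⟨p, hp.1, key p hp⟩
  · apply Set.Infinite.image ?_ hDir
    intro p hp p' hp' h
    have h2 := key p hp
    have h3 := key p' hp'
    rw [h] at h2
    exact_mod_cast h2.symm.trans h3


theorem stmt8 (f₁ f₂ : Polynomial ℤ) (h₁ : f₁ ≠ 0) (h₂ : f₂ ≠ 0)
    (hdeg : 0 < f₂.natDegree)
    (hcop : ∀ z : ℂ, Polynomial.aeval z f₁ ≠ 0 ∨ Polynomial.aeval z f₂ ≠ 0)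
    (hp : ∀ p : ℕ, p.Prime → ∃ n : ℤ, ¬ ((p : ℤ) ∣ f₁.eval n) ∨ ¬ ((p : ℤ) ∣ f₂.eval n)) :
    Set.Infinite {n : ℤ |
      Set.Infinite {ℓ : ℤ | ∃ p : ℕ, p.Prime ∧ f₁.eval n + ℓ * f₂.eval n = (p : ℤ)}} := by
  obtain ⟨u, v, c, hc, hcomb⟩ := combo f₁ f₂ hcop
  obtain ⟨n₀, hn₀⟩ := crt f₁ f₂ hp c.natAbs.primeFactors
    (fun p hps => Nat.prime_of_mem_primeFactors hps)
  -- every n ≡ n₀ mod c has coprime values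
  have hgood : ∀ k : ℤ, IsCoprime (f₁.eval (n₀ + k * c)) (f₂.eval (n₀ + k * c)) := by
    intro k
    rw [Int.isCoprime_iff_gcd_eq_one]
    by_contra hg
    set A := f₁.eval (n₀ + k * c) with hA
    set B := f₂.eval (n₀ + k * c) with hB
    rcases eq_or_ne (Int.gcd A B) 0 with h0 | h0
    · obtain ⟨hA0, hB0⟩ := Int.gcd_eq_zero_iff.mp h0
      have := hcomb (n₀ + k * c)
      rw [← hA, ← hB, hA0, hB0] at this
      simp at this
      exact hc this.symm
    · obtain ⟨p, hpp, hpg⟩ := Nat.exists_prime_and_dvd hg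
      have hpA : (p : ℤ) ∣ A :=
        ((Int.natCast_dvd_natCast.mpr hpg).trans (Int.gcd_dvd_left _ _))
      have hpB : (p : ℤ) ∣ B :=
        ((Int.natCast_dvd_natCast.mpr hpg).trans (Int.gcd_dvd_right _ _))
      have hpc : (p : ℤ) ∣ c := by
        rw [← hcomb (n₀ + k * c)]
        exact dvd_add (hpA.mul_left _) (hpB.mul_left _)
      have hmem : p ∈ c.natAbs.primeFactors := by
        refine Nat.mem_primeFactors.mpr ⟨hpp, ?_, Int.natAbs_ne_zero.mpr hc⟩
        exact Int.natAbs_dvd_natAbs.mpr hpc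
      have hdvd : (p : ℤ) ∣ (n₀ + k * c) - n₀ := by
        have : (n₀ + k * c) - n₀ = k * c := by ring
        rw [this]
        exact hpc.mul_left k
      rcases hn₀ p hmem with h | h
      · exact h ((eval_dvd_congr _ _ _ _ hdvd).mp hpA)
      · exact h ((eval_dvd_congr _ _ _ _ hdvd).mp hpB)
  have hroots : {x : ℤ | f₂.IsRoot x}.Finite := f₂.finite_setOf_isRoot h₂
  have hrange : (Set.range (fun k : ℤ => n₀ + k * c)).Infinite := by
    apply Set.infinite_range_of_injective
    intro k1 k2 h
    simp only [] at h
    have : k1 * c = k2 * c := by linarith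
    exact mul_right_cancel₀ hc this
  apply Set.Infinite.mono ?_ (hrange.diff hroots)
  rintro n ⟨⟨k, rfl⟩, hnr⟩
  exact inner_inf f₁ f₂ _ (fun h => hnr h) (hgood k)
end

section
/- Let f₁,…,f_s ∈ ℤ[x] (s ≥ 1) be nonzero polynomials such that no prime number divides the product f₁(n)⋯f_s(n) for every n ∈ ℤ. Then for every integer m > 0, there exist infinitely many n ∈ ℤ such that for each i = 1,…,s, f_i(n) is congruent modulo m to some prime number. -/
open Polynomial

theorem stmt9 (s : ℕ) (hs : 1 ≤ s) (f : Fin s → Polynomial ℤ)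
    (hne : ∀ i, f i ≠ 0)
    (hp : ∀ p : ℕ, p.Prime → ∃ n : ℤ, ¬ ((p : ℤ) ∣ ∏ i, (f i).eval n)) :
    ∀ m : ℤ, 0 < m →
      Set.Infinite {n : ℤ | ∀ i : Fin s,
        ∃ p : ℕ, p.Prime ∧ (f i).eval n ≡ (p : ℤ) [ZMOD m]} := by
  classical
  intro m hm
  set k := m.natAbs with hkdef
  have hk0 : k ≠ 0 := Int.natAbs_ne_zero.mpr hm.ne'
  haveI : NeZero k := ⟨hk0⟩
  have hmk : m ∣ (k : ℤ) := Int.dvd_natAbs.mpr dvd_rfl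
  have hkm : (k : ℤ) ∣ m := Int.natAbs_dvd.mpr dvd_rfl
  -- choose witnesses for each prime factor of k
  have hprime : ∀ p : k.primeFactors, Nat.Prime (p : ℕ) :=
    fun p => Nat.prime_of_mem_primeFactors p.2
  choose nn hnn using fun p : k.primeFactors => hp p (hprime p)
  -- Chinese remainder
  have hpair : Pairwise (Function.onFun Nat.Coprime fun p : k.primeFactors => (p : ℕ)) := by
    intro p q hpq
    exact (Nat.coprime_primes (hprime p) (hprime q)).mpr fun h => hpq (Subtype.ext h)
  set N := ∏ p : k.primeFactors, (p : ℕ) with hN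
  have hN0 : N ≠ 0 := Finset.prod_ne_zero_iff.mpr fun p _ => (hprime p).ne_zero
  haveI : NeZero N := ⟨hN0⟩
  let e := ZMod.prodEquivPi (fun p : k.primeFactors => (p : ℕ)) hpair
  set z : ZMod N := e.symm (fun p => ((nn p : ℤ) : ZMod (p : ℕ))) with hzdef
  set n₀ : ℤ := (z.val : ℤ) with hn₀
  have hz : ((n₀ : ℤ) : ZMod N) = z := by
    rw [hn₀]
    push_cast
    exact ZMod.natCast_rightInverse z
  have key : ∀ p : k.primeFactors, ((n₀ : ZMod (p : ℕ))) = ((nn p : ℤ) : ZMod (p : ℕ)) := by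
    intro p
    have hdvd : (p : ℕ) ∣ N := Finset.dvd_prod_of_mem _ (Finset.mem_univ p)
    have h1 : (Pi.evalRingHom (fun q : k.primeFactors => ZMod (q : ℕ)) p).comp
        (e : ZMod N →+* _) = ZMod.castHom hdvd (ZMod (p : ℕ)) := RingHom.ext_zmod _ _
    calc ((n₀ : ℤ) : ZMod (p : ℕ))
        = ZMod.castHom hdvd (ZMod (p : ℕ)) ((n₀ : ℤ) : ZMod N) := (map_intCast _ _).symm
      _ = (Pi.evalRingHom (fun q : k.primeFactors => ZMod (q : ℕ)) p).comp
          (e : ZMod N →+* _) ((n₀ : ℤ) : ZMod N) := by rw [h1]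
      _ = e z p := by rw [hz]; rfl
      _ = ((nn p : ℤ) : ZMod (p : ℕ)) := by
          rw [hzdef, RingEquiv.apply_symm_apply]
  -- no prime factor of k divides the product at n₀
  have hco : ∀ q : ℕ, q.Prime → q ∣ k → ¬ ((q : ℤ) ∣ ∏ i, (f i).eval n₀) := by
    intro q hq hqk hdvd
    have hqm : q ∈ k.primeFactors := Nat.mem_primeFactors.mpr ⟨hq, hqk, hk0⟩
    have h1 := key ⟨q, hqm⟩
    have h2 : (q : ℤ) ∣ n₀ - nn ⟨q, hqm⟩ := by
      have := (ZMod.intCast_eq_intCast_iff' _ _ _).mp h1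
      exact Int.ModEq.dvd this.symm
    have h3 : n₀ - nn ⟨q, hqm⟩ ∣
        (∏ i, f i).eval n₀ - (∏ i, f i).eval (nn ⟨q, hqm⟩) :=
      Polynomial.sub_dvd_eval_sub _ _ _
    have h4 : (q : ℤ) ∣ (∏ i, (f i).eval n₀) - (∏ i, (f i).eval (nn ⟨q, hqm⟩)) := by
      simpa [Polynomial.eval_prod] using h2.trans h3
    exact hnn ⟨q, hqm⟩ ((dvd_sub_right hdvd).mp h4)
  -- coprimality of the product with m
  have hcop : IsCoprime (∏ i, (f i).eval n₀) m := by
    rw [Int.isCoprime_iff_gcd_eq_one]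
    by_contra h
    obtain ⟨q, hq, hqd⟩ := Nat.exists_prime_and_dvd h
    have h1 : (q : ℤ) ∣ ∏ i, (f i).eval n₀ :=
      (Int.natCast_dvd_natCast.mpr (hqd.trans (Nat.gcd_dvd_left _ _))).trans
        (Int.natAbs_dvd.mpr dvd_rfl)
    have h2 : q ∣ k := hqd.trans (Nat.gcd_dvd_right _ _)
    exact hco q hq h2 h1
  -- each factor is coprime to m, hence a unit mod k
  have hunit : ∀ i : Fin s, IsUnit (((f i).eval n₀ : ℤ) : ZMod k) := by
    intro i
    have hci : IsCoprime ((f i).eval n₀) m :=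
      hcop.of_isCoprime_of_dvd_left (Finset.dvd_prod_of_mem _ (Finset.mem_univ i))
    obtain ⟨u, v, huv⟩ := hci
    have hm0 : ((m : ℤ) : ZMod k) = 0 :=
      (ZMod.intCast_zmod_eq_zero_iff_dvd _ _).mpr hkm
    apply IsUnit.of_mul_eq_one ((u : ℤ) : ZMod k)
    have : ((u * (f i).eval n₀ + v * m : ℤ) : ZMod k) = ((1 : ℤ) : ZMod k) := by rw [huv]
    push_cast at this
    rw [hm0] at this
    ring_nf at this ⊢
    linear_combination this
  -- membership of the arithmetic progression
  have hmem : ∀ j : ℕ, (n₀ + m * j) ∈ {n : ℤ | ∀ i : Fin s,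
      ∃ p : ℕ, p.Prime ∧ (f i).eval n ≡ (p : ℤ) [ZMOD m]} := by
    intro j i
    obtain ⟨p, hpp, hpe⟩ := (Nat.infinite_setOfPred_prime_and_eq_mod (hunit i)).nonempty
    refine ⟨p, hpp, ?_⟩
    have hd : m ∣ (n₀ + m * j) - n₀ := ⟨j, by ring⟩
    have hmod : (f i).eval (n₀ + m * j) ≡ (f i).eval n₀ [ZMOD m] := by
      have := Polynomial.sub_dvd_eval_sub (n₀ + m * j) n₀ (f i)
      exact (Int.modEq_iff_dvd.mpr (hd.trans this)).symm
    have h1 : ((f i).eval n₀ ≡ (p : ℤ) [ZMOD (k : ℤ)]) := by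
      rw [← ZMod.intCast_eq_intCast_iff]
      push_cast
      exact hpe.symm
    exact hmod.trans (h1.of_dvd hmk)
  -- conclude infiniteness
  apply Set.infinite_of_injective_forall_mem (f := fun j : ℕ => n₀ + m * j) _ hmem
  intro a b hab
  simp only at hab
  have : (a : ℤ) = b := mul_left_cancel₀ hm.ne' (by linarith)
  exact_mod_cast this
end

section
/- For all positive integers m and ℓ, there exist infinitely many pairs of primes (p, q) such that p + q ≡ 2ℓ (mod m). -/
theorem stmt10 (m ℓ : ℕ) (hm : 0 < m) (hℓ : 0 < ℓ) :
    Set.Infinite {pq : ℕ × ℕ | pq.1.Prime ∧ pq.2.Prime ∧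
      pq.1 + pq.2 ≡ 2 * ℓ [MOD m]} := by
  haveI : NeZero m := ⟨hm.ne'⟩
  -- t : product of primes dividing m but not ℓ
  set t : ℕ := ∏ p ∈ m.primeFactors \ ℓ.primeFactors, p with ht
  have hdvd_t : ∀ p : ℕ, p.Prime → (p ∣ t ↔ p ∈ m.primeFactors \ ℓ.primeFactors) := by
    intro p hp
    constructor
    · intro h
      obtain ⟨q, hq, hpq⟩ := (hp.prime.dvd_finset_prod_iff _).mp h
      have : p = q := ((Nat.prime_of_mem_primeFactors (Finset.mem_sdiff.mp hq).1).eq_one_or_self_of_dvd p hpq).resolve_left hp.one_lt.ne'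
      exact this ▸ hq
    · intro h
      exact Finset.dvd_prod_of_mem _ h
  have key : ∀ p : ℕ, p.Prime → p ∣ m → (p ∣ ℓ → ¬ p ∣ t) ∧ (¬ p ∣ ℓ → p ∣ t) := by
    intro p hp hpm
    constructor
    · intro hpl hpt
      have := (hdvd_t p hp).mp hpt
      rw [Finset.mem_sdiff] at this
      exact this.2 (Nat.mem_primeFactors.mpr ⟨hp, hpl, hℓ.ne'⟩)
    · intro hpl
      exact (hdvd_t p hp).mpr (Finset.mem_sdiff.mpr ⟨Nat.mem_primeFactors.mpr ⟨hp, hpm, hm.ne'⟩, fun h => hpl (Nat.dvd_of_mem_primeFactors h)⟩)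
  -- a = ℓ + t, b = ℓ + (m-1)*t are coprime to m
  have ha : Nat.Coprime (ℓ + t) m := by
    rw [Nat.coprime_comm]
    apply Nat.Coprime.symm
    rw [Nat.coprime_iff_gcd_eq_one]
    by_contra h
    obtain ⟨p, hp, hpd⟩ := Nat.exists_prime_and_dvd h
    have hpm : p ∣ m := hpd.trans (Nat.gcd_dvd_right _ _)
    have hpa : p ∣ ℓ + t := hpd.trans (Nat.gcd_dvd_left _ _)
    by_cases hpl : p ∣ ℓ
    · exact (key p hp hpm).1 hpl ((Nat.dvd_add_right hpl).mp hpa)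
    · exact hpl ((Nat.dvd_add_right ((key p hp hpm).2 hpl)).mp (by rwa [Nat.add_comm] at hpa))
  have hb : Nat.Coprime (ℓ + (m - 1) * t) m := by
    rw [Nat.coprime_iff_gcd_eq_one]
    by_contra h
    obtain ⟨p, hp, hpd⟩ := Nat.exists_prime_and_dvd h
    have hpm : p ∣ m := hpd.trans (Nat.gcd_dvd_right _ _)
    have hpb : p ∣ ℓ + (m - 1) * t := hpd.trans (Nat.gcd_dvd_left _ _)
    by_cases hpl : p ∣ ℓ
    · have hpt : ¬ p ∣ t := (key p hp hpm).1 hpl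
      have h1 : p ∣ (m - 1) * t := (Nat.dvd_add_right hpl).mp hpb
      have h2 : p ∣ m - 1 := (hp.dvd_mul.mp h1).resolve_right hpt
      have h3 : p ∣ 1 := by
        have := Nat.dvd_sub hpm h2
        rwa [Nat.sub_sub_self hm] at this
      exact hp.one_lt.ne' (Nat.dvd_one.mp h3)
    · have hpt : p ∣ t := (key p hp hpm).2 hpl
      exact hpl ((Nat.dvd_add_right (hpt.mul_left (m-1))).mp (by rwa [Nat.add_comm] at hpb))
  -- Dirichlet's theorem for both residues
  have hua : IsUnit ((ℓ + t : ℕ) : ZMod m) := (ZMod.isUnit_iff_coprime _ _).mpr ha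
  have hub : IsUnit ((ℓ + (m - 1) * t : ℕ) : ZMod m) := (ZMod.isUnit_iff_coprime _ _).mpr hb
  have hA := Nat.infinite_setOfPred_prime_and_eq_mod hua
  have hB := Nat.infinite_setOfPred_prime_and_eq_mod hub
  refine Set.Infinite.mono ?_ (hA.prod_left hB.nonempty)
  rintro ⟨p, q⟩ ⟨⟨hp, hpa⟩, hq, hqb⟩
  refine ⟨hp, hq, ?_⟩
  have h1 : p ≡ ℓ + t [MOD m] := (ZMod.natCast_eq_natCast_iff _ _ _).mp hpa
  have h2 : q ≡ ℓ + (m - 1) * t [MOD m] := (ZMod.natCast_eq_natCast_iff _ _ _).mp hqb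
  have h3 : (ℓ + t) + (ℓ + (m - 1) * t) = 2 * ℓ + m * t := by
    have hm1 : 1 + (m - 1) = m := by omega
    have : t + (m - 1) * t = m * t := by
      calc t + (m - 1) * t = (1 + (m - 1)) * t := by ring
        _ = m * t := by rw [hm1]
    omega
  calc p + q ≡ (ℓ + t) + (ℓ + (m - 1) * t) [MOD m] := h1.add h2
    _ = 2 * ℓ + m * t := h3
    _ ≡ 2 * ℓ + 0 [MOD m] := Nat.ModEq.add_left _ ((Nat.modEq_zero_iff_dvd).mpr ⟨t, rfl⟩)
    _ = 2 * ℓ := by omega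
end

section
/- For every positive integer m, there exist infinitely many pairs of primes (p, q) such that q ≡ p + 2 (mod m). -/
theorem stmt11 (m : ℕ) (hm : 0 < m) :
    Set.Infinite {pq : ℕ × ℕ | pq.1.Prime ∧ pq.2.Prime ∧
      pq.2 ≡ pq.1 + 2 [MOD m]} := by
  haveI : NeZero m := ⟨hm.ne'⟩
  obtain ⟨p, -, hp, hpm⟩ := Nat.forall_exists_prime_gt_and_eq_mod
    (q := m) (a := -1) isUnit_one.neg 0
  have hS : Set.Infinite {q : ℕ | q.Prime ∧ (q : ZMod m) = 1} :=
    Nat.infinite_setOfPred_prime_and_eq_mod isUnit_one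
  have := hS.image (f := fun q => (p, q)) (fun a _ b _ h => by
    simpa using congrArg Prod.snd h)
  refine this.mono ?_
  rintro ⟨x, y⟩ ⟨q, ⟨hq, hq1⟩, heq⟩
  obtain ⟨rfl, rfl⟩ := Prod.mk.injEq .. ▸ heq
  refine ⟨hp, hq, ?_⟩
  rw [← ZMod.natCast_eq_natCast_iff]
  push_cast
  rw [hq1, hpm]
  ring
end

section
/- Let f(x) = a_d x^d + ⋯ + a₁x + a₀ ∈ ℤ[x] have degree d. Fix an integer T > 0 and m ∈ ℤ. If an integer k divides f(m + ℓT) for every non-negative integer ℓ, then k divides a_d · T^d · d!. -/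
open Polynomial Finset

lemma taylor_coeff_calc (f : Polynomial ℤ) (d : ℕ) (hd : f.natDegree = d + 1) (T : ℤ) :
    (taylor T f).coeff d = f.coeff d + (d + 1) * f.coeff (d + 1) * T := by
  rw [taylor_coeff]
  have h1 : (hasseDeriv d f).natDegree < 2 := by
    have := natDegree_hasseDeriv_le f d
    omega
  rw [eval_eq_sum_range' h1]
  have hc : (1 + d).choose d = d + 1 := by
    rw [Nat.add_comm, Nat.choose_succ_self_right]
  simp only [Finset.sum_range_succ, Finset.sum_range_one, hasseDeriv_coeff, hc, Nat.choose_self, zero_add, Nat.cast_one, one_mul]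
  push_cast
  ring

lemma taylor_coeff_top (f : Polynomial ℤ) (d : ℕ) (hd : f.natDegree = d + 1) (T : ℤ) :
    (taylor T f).coeff (d + 1) = f.coeff (d + 1) := by
  rw [taylor_coeff]
  have h1 : (hasseDeriv (d+1) f).natDegree < 1 := by
    have := natDegree_hasseDeriv_le f (d+1)
    omega
  rw [eval_eq_sum_range' h1]
  simp [hasseDeriv_coeff]

theorem stmt12 (f : Polynomial ℤ) (d : ℕ) (hf : f ≠ 0) (hd : f.natDegree = d)
    (T : ℤ) (hT : 0 < T) (m : ℤ) (k : ℤ)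
    (hdvd : ∀ ℓ : ℕ, k ∣ f.eval (m + ℓ * T)) :
    k ∣ f.leadingCoeff * T ^ d * (d.factorial : ℤ) := by
  induction d generalizing f with
  | zero =>
    have h := hdvd 0
    have he : f.eval (m + (0 : ℕ) * T) = f.leadingCoeff := by
      rw [eval_eq_sum_range' (show f.natDegree < 1 by omega)]
      simp [Polynomial.leadingCoeff, hd]
    rw [he] at h
    simpa using h
  | succ d ih =>
    set g := taylor T f - f with hg
    have hlc : f.leadingCoeff ≠ 0 := leadingCoeff_ne_zero.mpr hf
    have hcd : g.coeff d = ((d : ℤ) + 1) * f.leadingCoeff * T := by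
      rw [hg, coeff_sub, taylor_coeff_calc f d hd T, Polynomial.leadingCoeff, hd]
      push_cast
      ring
    have hcdne : g.coeff d ≠ 0 := by
      rw [hcd]
      refine mul_ne_zero (mul_ne_zero ?_ hlc) hT.ne'
      positivity
    have hgle : g.natDegree ≤ d := by
      rw [natDegree_le_iff_coeff_eq_zero]
      intro i hi
      rcases eq_or_lt_of_le (Nat.succ_le_of_lt hi) with h | h
      · rw [hg, coeff_sub, ← h, taylor_coeff_top f d hd T, sub_self]
      · rw [hg, coeff_sub, coeff_eq_zero_of_natDegree_lt, coeff_eq_zero_of_natDegree_lt, sub_self]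
        · omega
        · rw [natDegree_taylor]; omega
    have hgdeg : g.natDegree = d := le_antisymm hgle (le_natDegree_of_ne_zero hcdne)
    have hgne : g ≠ 0 := fun h => hcdne (by simp [h])
    have hgdvd : ∀ ℓ : ℕ, k ∣ g.eval (m + ℓ * T) := by
      intro ℓ
      have he : g.eval (m + ℓ * T) = f.eval (m + ((ℓ : ℕ) + 1 : ℕ) * T) - f.eval (m + ℓ * T) := by
        rw [hg, eval_sub, taylor_eval]
        push_cast
        ring
      rw [he]
      exact dvd_sub (hdvd (ℓ + 1)) (hdvd ℓ)
    have hkey := ih g hgne hgdeg hgdvd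
    have hglc : g.leadingCoeff = ((d : ℤ) + 1) * f.leadingCoeff * T := by
      rw [Polynomial.leadingCoeff, hgdeg, hcd]
    have heq : f.leadingCoeff * T ^ (d + 1) * ((d + 1).factorial : ℤ)
        = g.leadingCoeff * T ^ d * (d.factorial : ℤ) := by
      rw [hglc, Nat.factorial_succ]
      push_cast
      ring
    rw [heq]
    exact hkey
end

section
/- Let f ∈ ℤ[x] be a monic polynomial of degree d, and suppose an integer k divides f(n) for every n ∈ ℤ. Then k divides d!. -/
open Polynomial

lemma aux13 (d : ℕ) : ∀ f : Polynomial ℤ, ∀ k : ℤ, f.natDegree ≤ d →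
    (∀ n : ℤ, k ∣ f.eval n) → k ∣ (d.factorial : ℤ) * f.coeff d := by
  induction d with
  | zero =>
    intro f k hdeg hdvd
    have := hdvd 0
    rw [← Polynomial.coeff_zero_eq_eval_zero] at this
    simpa using this
  | succ d ih =>
    intro f k hdeg hdvd
    set g : Polynomial ℤ := taylor 1 f - f with hg
    have hgdvd : ∀ n : ℤ, k ∣ g.eval n := by
      intro n
      have : g.eval n = f.eval (n + 1) - f.eval n := by
        simp [hg, taylor_eval, add_comm]
      rw [this]
      exact dvd_sub (hdvd (n + 1)) (hdvd n)
    have hgcoeff : ∀ N : ℕ, d < N → g.coeff N = 0 := by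
      intro N hN
      rcases eq_or_lt_of_le (Nat.succ_le_of_lt hN) with h | h
      · -- N = d + 1
        have hN' : N = d + 1 := h.symm
        subst hN'
        have h1 : (hasseDeriv (d + 1) f).natDegree ≤ 0 := by
          have := natDegree_hasseDeriv_le f (d + 1)
          omega
        have h2 : hasseDeriv (d + 1) f = C ((hasseDeriv (d + 1) f).coeff 0) :=
          Polynomial.eq_C_of_natDegree_le_zero h1
        have h3 : (hasseDeriv (d + 1) f).coeff 0 = f.coeff (d + 1) := by
          rw [hasseDeriv_coeff]
          simp
        rw [hg, coeff_sub, taylor_coeff, h2, eval_C, h3, sub_self]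
      · -- N > d + 1
        have hf0 : f.coeff N = 0 := coeff_eq_zero_of_natDegree_lt (lt_of_le_of_lt hdeg h)
        have hhd : hasseDeriv N f = 0 :=
          hasseDeriv_eq_zero_of_lt_natDegree f N (lt_of_le_of_lt hdeg h)
        simp [hg, coeff_sub, taylor_coeff, hhd, hf0]
    have hgdeg : g.natDegree ≤ d := natDegree_le_iff_coeff_eq_zero.mpr hgcoeff
    have hgd : g.coeff d = (d + 1 : ℤ) * f.coeff (d + 1) := by
      have h1 : (hasseDeriv d f).natDegree ≤ 1 := by
        have := natDegree_hasseDeriv_le f d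
        omega
      have h2 := Polynomial.eq_X_add_C_of_natDegree_le_one h1
      have h3 : (hasseDeriv d f).eval 1 =
          (hasseDeriv d f).coeff 1 + (hasseDeriv d f).coeff 0 := by
        conv_lhs => rw [h2]
        simp
      have h4 : (hasseDeriv d f).coeff 0 = f.coeff d := by
        rw [hasseDeriv_coeff]; simp
      have h5 : (hasseDeriv d f).coeff 1 = (d + 1 : ℤ) * f.coeff (d + 1) := by
        rw [hasseDeriv_coeff, add_comm 1 d, Nat.choose_succ_self_right]
        push_cast
        ring
      rw [hg, coeff_sub, taylor_coeff, h3, h4, h5]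
      ring
    have := ih g k hgdeg hgdvd
    rw [hgd] at this
    have heq : ((d + 1).factorial : ℤ) * f.coeff (d + 1) =
        (d.factorial : ℤ) * ((d + 1 : ℤ) * f.coeff (d + 1)) := by
      rw [Nat.factorial_succ]
      push_cast
      ring
    rw [heq]
    exact this

theorem stmt13 (f : Polynomial ℤ) (d : ℕ) (hf : f.Monic) (hd : f.natDegree = d)
    (k : ℤ) (hdvd : ∀ n : ℤ, k ∣ f.eval n) :
    k ∣ (d.factorial : ℤ) := by
  have h1 : f.coeff d = 1 := by
    rw [← hd]; exact hf.coeff_natDegree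
  have := aux13 d f k hd.le hdvd
  rwa [h1, mul_one] at this
end

section
/- Let f₁,…,f_s ∈ ℤ[x] (s ≥ 2) be nonzero coprime monic polynomials, and let d* be the gcd of all the integers f_i(n) over n ∈ ℤ and i = 1,…,s. Then d* divides (deg f_i)! for each i = 1,…,s. -/
open Polynomial

/-- Coefficient of `g.comp (X+1)` as a binomial sum. -/
lemma comp_X_add_one_coeff (g : Polynomial ℤ) (N m : ℕ) (hN : g.natDegree < N) :
    (g.comp (X + 1)).coeff m = ∑ j ∈ Finset.range N, g.coeff j * (j.choose m) := by
  conv_lhs => rw [g.as_sum_range' N hN]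
  rw [Polynomial.sum_comp, Polynomial.finset_sum_coeff]
  refine Finset.sum_congr rfl fun j _ => ?_
  rw [← C_mul_X_pow_eq_monomial, Polynomial.mul_comp, Polynomial.C_comp,
    Polynomial.X_pow_comp, Polynomial.coeff_C_mul, coeff_X_add_one_pow]

/-- If `k` divides all values of `g` and `g.natDegree ≤ d`, then `k ∣ d! * g.coeff d`. -/
lemma dvd_factorial_mul_coeff (k : ℤ) :
    ∀ (d : ℕ) (g : Polynomial ℤ), g.natDegree ≤ d → (∀ n : ℤ, k ∣ g.eval n) →
      k ∣ (d.factorial : ℤ) * g.coeff d := by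
  intro d
  induction d with
  | zero =>
    intro g hd hk
    simpa [Polynomial.coeff_zero_eq_eval_zero] using hk 0
  | succ d ih =>
    intro g hd hk
    set g' : Polynomial ℤ := g.comp (X + 1) - g with hg'
    have hcoeff : ∀ m, d ≤ m → g'.coeff m =
        (if m = d then ((d + 1 : ℕ) : ℤ) * g.coeff (d + 1) else 0) := by
      intro m hm
      have hcomp := comp_X_add_one_coeff g (d + 2) m (by omega)
      rw [hg', Polynomial.coeff_sub, hcomp]
      rw [Finset.sum_range_succ, Finset.sum_range_succ]
      have hsmall : ∑ j ∈ Finset.range d, g.coeff j * (j.choose m : ℤ) = 0 := by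
        refine Finset.sum_eq_zero fun j hj => ?_
        have hj' := Finset.mem_range.mp hj
        rw [Nat.choose_eq_zero_of_lt (by omega : j < m)]
        simp
      rw [hsmall]
      rcases eq_or_ne m d with rfl | hne
      · simp [Nat.choose_self, Nat.choose_succ_self_right]
        ring
      · have hmd : d < m := lt_of_le_of_ne hm (Ne.symm hne)
        rw [Nat.choose_eq_zero_of_lt hmd]
        rcases eq_or_ne m (d + 1) with rfl | hne2
        · simp
        · have : d + 1 < m := by omega
          rw [Nat.choose_eq_zero_of_lt this]
          have : g.coeff m = 0 := Polynomial.coeff_eq_zero_of_natDegree_lt (by omega)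
          simp [this, hne]
    have hdeg : g'.natDegree ≤ d := by
      refine Polynomial.natDegree_le_iff_coeff_eq_zero.mpr fun m hm => ?_
      rw [hcoeff m (by omega), if_neg (by omega)]
    have hvals : ∀ n : ℤ, k ∣ g'.eval n := by
      intro n
      have : g'.eval n = g.eval (n + 1) - g.eval n := by
        simp [hg', Polynomial.eval_comp]
      rw [this]
      exact dvd_sub (hk _) (hk _)
    have := ih g' hdeg hvals
    rw [hcoeff d le_rfl, if_pos rfl] at this
    have hfac : ((d + 1).factorial : ℤ) * g.coeff (d + 1) =
        (d.factorial : ℤ) * (((d + 1 : ℕ) : ℤ) * g.coeff (d + 1)) := by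
      rw [Nat.factorial_succ]
      push_cast
      ring
    rw [hfac]
    exact this

theorem stmt14 (s : ℕ) (hs : 2 ≤ s) (f : Fin s → Polynomial ℤ)
    (hmonic : ∀ i, (f i).Monic)
    (hcop : ∀ z : ℂ, ∃ i, Polynomial.aeval z (f i) ≠ 0)
    (dstar : ℤ)
    (hdiv : ∀ (n : ℤ) (i : Fin s), dstar ∣ (f i).eval n)
    (hgreat : ∀ k : ℤ, (∀ (n : ℤ) (i : Fin s), k ∣ (f i).eval n) → k ∣ dstar) :
    ∀ i : Fin s, dstar ∣ (((f i).natDegree).factorial : ℤ) := by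
  intro i
  have := dvd_factorial_mul_coeff dstar (f i).natDegree (f i) le_rfl (fun n => hdiv n i)
  rwa [show (f i).coeff (f i).natDegree = 1 from hmonic i, mul_one] at this
end

section
/- Let f₁,…,f_s ∈ ℤ[x] (s ≥ 2) be nonzero coprime polynomials, and let m* be the lcm of the set {gcd(f₁(n),…,f_s(n)) : n ∈ ℤ}. Then the sequence d_n = gcd(f₁(n),…,f_s(n)) is periodic of period m*: d_{n+m*} = d_n for all n ∈ ℤ. -/
open Polynomial

theorem stmt15 (s : ℕ) (hs : 2 ≤ s) (f : Fin s → Polynomial ℤ)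
    (hne : ∀ i, f i ≠ 0)
    (hcop : ∀ z : ℂ, ∃ i, Polynomial.aeval z (f i) ≠ 0)
    (mstar : ℤ)
    (hmul : ∀ n : ℤ, (Finset.univ.gcd fun i => (f i).eval n) ∣ mstar)
    (hleast : ∀ k : ℤ, (∀ n : ℤ, (Finset.univ.gcd fun i => (f i).eval n) ∣ k) →
      mstar ∣ k) :
    ∀ n : ℤ, (Finset.univ.gcd fun i => (f i).eval (n + mstar)) =
      (Finset.univ.gcd fun i => (f i).eval n) := by
  intro n
  have hsub : ∀ i : Fin s, mstar ∣ (f i).eval (n + mstar) - (f i).eval n := by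
    intro i
    have := Polynomial.sub_dvd_eval_sub (n + mstar) n (f i)
    simpa using this
  refine dvd_antisymm_of_normalize_eq Finset.normalize_gcd Finset.normalize_gcd ?_ ?_
  · apply Finset.dvd_gcd
    intro i _
    have h1 : (Finset.univ.gcd fun i => (f i).eval (n + mstar)) ∣
        (f i).eval (n + mstar) := Finset.gcd_dvd (Finset.mem_univ i)
    have h2 : (Finset.univ.gcd fun i => (f i).eval (n + mstar)) ∣
        (f i).eval (n + mstar) - (f i).eval n :=
      (hmul (n + mstar)).trans (hsub i)
    simpa using h1.sub h2
  · apply Finset.dvd_gcd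
    intro i _
    have h1 : (Finset.univ.gcd fun i => (f i).eval n) ∣
        (f i).eval n := Finset.gcd_dvd (Finset.mem_univ i)
    have h2 : (Finset.univ.gcd fun i => (f i).eval n) ∣
        (f i).eval (n + mstar) - (f i).eval n :=
      (hmul n).trans (hsub i)
    simpa using h1.add h2
end

section
/- Let f₁,…,f_s ∈ ℤ[x] (s ≥ 2) be nonzero coprime polynomials, let T > 0 be a period of the sequence d_n = gcd(f₁(n),…,f_s(n)), and write f₁(x) = a_d x^d + ⋯ with deg f₁ = d. Then m* = lcm{d_n : n ∈ ℤ} divides a_d · T^d · d!. -/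
open Polynomial Finset

lemma fwdDiff_pow_int (T : ℤ) (d : ℕ) : ∀ m : ℕ, m ≤ d →
    (fwdDiff T)^[d] (fun x : ℤ => x ^ m) =
      fun _ => if m = d then ((d.factorial : ℤ) * T ^ d) else 0 := by
  induction d with
  | zero =>
    intro m hm
    interval_cases m
    simp [Nat.factorial]
  | succ d IH =>
    intro m hm
    have hdiff : fwdDiff T (fun x : ℤ => x ^ m) =
        fun x : ℤ => ∑ j ∈ Finset.range m, (m.choose j : ℤ) * T ^ (m - j) * x ^ j := by
      funext x
      rw [fwdDiff, add_pow, Finset.sum_range_succ]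
      simp only [Nat.choose_self, Nat.cast_one, mul_one, Nat.sub_self, pow_zero]
      rw [add_sub_cancel_right]
      exact Finset.sum_congr rfl fun j _ => by ring
    have hx : (fun x : ℤ => ∑ j ∈ Finset.range m, (m.choose j : ℤ) * T ^ (m - j) * x ^ j)
        = ∑ j ∈ Finset.range m, ((m.choose j : ℤ) * T ^ (m - j)) • (fun x : ℤ => x ^ j) := by
      funext x; simp [Finset.sum_apply]
    rw [Function.iterate_succ_apply, hdiff, hx, fwdDiff_iter_finset_sum]
    simp only [fwdDiff_iter_const_smul]
    have hterm : ∀ j ∈ Finset.range m,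
        ((m.choose j : ℤ) * T ^ (m - j)) • (fwdDiff T)^[d] (fun x : ℤ => x ^ j)
        = fun _ : ℤ => if m = d + 1 ∧ j = d then ((d + 1).factorial : ℤ) * T ^ (d + 1) else 0 := by
      intro j hj
      rw [Finset.mem_range] at hj
      rw [IH j (by omega)]
      funext x
      simp only [Pi.smul_apply, smul_eq_mul]
      by_cases hc : m = d + 1 ∧ j = d
      · obtain ⟨hm', hjd⟩ := hc
        rw [hm', hjd]
        have h1 : d + 1 - d = 1 := by omega
        simp only [if_pos rfl, and_self, h1, Nat.factorial_succ, Nat.choose_succ_self_right]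
        push_cast
        ring
      · have hjd : j ≠ d := fun h => hc ⟨by omega, h⟩
        simp [hjd, hc]
    rw [Finset.sum_congr rfl hterm]
    by_cases hm' : m = d + 1
    · subst hm'
      funext x
      rw [Finset.sum_apply]
      rw [Finset.sum_eq_single d]
      · simp
      · intro b hb hbd; simp [hbd]
      · intro h; simp at h
    · funext x
      rw [Finset.sum_apply]
      simp [hm', fun (j : ℕ) (h : m = d + 1 ∧ j = d) => hm' h.1]

lemma fwdDiff_eval (T : ℤ) (P : Polynomial ℤ) :
    (fwdDiff T)^[P.natDegree] (fun x : ℤ => P.eval x) =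
      fun _ => P.leadingCoeff * ((P.natDegree.factorial : ℤ) * T ^ P.natDegree) := by
  set d := P.natDegree with hd
  have heval : (fun x : ℤ => P.eval x)
      = ∑ m ∈ Finset.range (d + 1), (P.coeff m) • (fun x : ℤ => x ^ m) := by
    funext x
    rw [Polynomial.eval_eq_sum_range]
    simp [Finset.sum_apply]
    rfl
  rw [heval, fwdDiff_iter_finset_sum]
  simp only [fwdDiff_iter_const_smul]
  funext x
  rw [Finset.sum_apply]
  rw [Finset.sum_eq_single d]
  · rw [fwdDiff_pow_int T d d le_rfl]
    simp only [Pi.smul_apply, smul_eq_mul, if_pos rfl]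
    rfl
  · intro m hm hmd
    rw [fwdDiff_pow_int T d m (by rw [Finset.mem_range] at hm; omega)]
    simp [hmd]
  · intro h; simp at h

theorem stmt16 (s : ℕ) (hs : 2 ≤ s) (f : Fin s → Polynomial ℤ)
    (hne : ∀ i, f i ≠ 0)
    (hcop : ∀ z : ℂ, ∃ i, Polynomial.aeval z (f i) ≠ 0)
    (T : ℤ) (hT : 0 < T)
    (hper : ∀ n : ℤ, (Finset.univ.gcd fun i => (f i).eval (n + T)) =
      (Finset.univ.gcd fun i => (f i).eval n))
    (mstar : ℤ)
    (hmul : ∀ n : ℤ, (Finset.univ.gcd fun i => (f i).eval n) ∣ mstar)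
    (hleast : ∀ k : ℤ, (∀ n : ℤ, (Finset.univ.gcd fun i => (f i).eval n) ∣ k) →
      mstar ∣ k) :
    mstar ∣ (f ⟨0, by omega⟩).leadingCoeff * T ^ (f ⟨0, by omega⟩).natDegree *
      (((f ⟨0, by omega⟩).natDegree).factorial : ℤ) := by
  set i0 : Fin s := ⟨0, by omega⟩
  set P := f i0 with hP
  set d := P.natDegree with hd
  apply hleast
  intro n
  have hper' : ∀ k : ℕ, (Finset.univ.gcd fun i => (f i).eval (n + (k : ℤ) * T)) =
      (Finset.univ.gcd fun i => (f i).eval n) := by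
    intro k
    induction k with
    | zero => simp
    | succ k IH =>
      have h1 : n + ((k : ℤ) + 1) * T = (n + (k : ℤ) * T) + T := by ring
      push_cast
      rw [h1, hper, IH]
  have hdvd : ∀ k : ℕ, (Finset.univ.gcd fun i => (f i).eval n) ∣ P.eval (n + (k : ℤ) * T) := by
    intro k
    rw [← hper' k]
    exact Finset.gcd_dvd (Finset.mem_univ i0)
  have hkey := congrFun (fwdDiff_eval T P) n
  rw [fwdDiff_iter_eq_sum_shift] at hkey
  have hd1 : (Finset.univ.gcd fun i => (f i).eval n) ∣
      P.leadingCoeff * ((d.factorial : ℤ) * T ^ d) := by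
    rw [hd, ← hkey]
    apply Finset.dvd_sum
    intro k hk
    rw [zsmul_eq_mul]
    exact Dvd.dvd.mul_left (by simpa using hdvd k) _
  have : P.leadingCoeff * ((d.factorial : ℤ) * T ^ d)
      = P.leadingCoeff * T ^ d * (d.factorial : ℤ) := by ring
  rw [this] at hd1
  exact hd1
end

section
/- Let f₁,…,f_s ∈ ℤ[x] (s ≥ 2) be nonzero polynomials, let H = min(H(f₁),…,H(f_s)) where H(f) is the normalized height. Then f₁,…,f_s are coprime in ℚ[x] if and only if there exists an integer n ≥ 2H + 3 such that gcd(f₁(n),…,f_s(n)) ≤ √n. -/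
open Polynomial

/-- The normalized height of a polynomial: the maximum of |aᵢ/a_d| over the
non-leading coefficients (0 for a constant polynomial, where the max is empty). -/
noncomputable def normHeight (f : Polynomial ℤ) : ℝ :=
  ⨆ i : Fin f.natDegree, |(f.coeff i : ℝ) / (f.leadingCoeff : ℝ)|

lemma normHeight_nonneg (f : Polynomial ℤ) : 0 ≤ normHeight f :=
  Real.iSup_nonneg fun _ => abs_nonneg _

lemma coeff_abs_le (f : Polynomial ℤ) (i : ℕ) (hi : i < f.natDegree) :
    |(f.coeff i : ℝ)| ≤ normHeight f * |(f.leadingCoeff : ℝ)| := by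
  have hf0 : f ≠ 0 := by
    intro h; rw [h] at hi; simp at hi
  have hL : (f.leadingCoeff : ℝ) ≠ 0 := by
    exact_mod_cast leadingCoeff_ne_zero.mpr hf0
  have h1 : |(f.coeff i : ℝ) / (f.leadingCoeff : ℝ)| ≤ normHeight f := by
    have := le_ciSup (f := fun j : Fin f.natDegree => |(f.coeff (j:ℕ) : ℝ) / (f.leadingCoeff : ℝ)|)
      (Set.Finite.bddAbove (Set.finite_range _)) ⟨i, hi⟩
    simpa [normHeight] using this
  rw [abs_div] at h1
  have hLpos : 0 < |(f.leadingCoeff : ℝ)| := abs_pos.mpr hL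
  calc |(f.coeff i : ℝ)| = |(f.coeff i : ℝ)| / |(f.leadingCoeff : ℝ)| * |(f.leadingCoeff : ℝ)| := by
        field_simp
    _ ≤ normHeight f * |(f.leadingCoeff : ℝ)| := by
        exact mul_le_mul_of_nonneg_right h1 hLpos.le

lemma root_abs_le (f : Polynomial ℤ) (hf : f ≠ 0) (z : ℂ)
    (hz : Polynomial.aeval z f = 0) : ‖z‖ ≤ 1 + normHeight f := by
  by_contra hgt
  push_neg at hgt
  have hH0 := normHeight_nonneg f
  set r := ‖z‖ with hr
  have hr1 : 1 < r := by linarith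
  set d := f.natDegree with hd
  have hd0 : d ≠ 0 := by
    intro h0
    have hfc := Polynomial.eq_C_of_natDegree_eq_zero h0
    have hz0 : f.coeff 0 = 0 := by
      rw [hfc] at hz; simpa using hz
    exact hf (by rw [hfc, hz0, Polynomial.C_0])
  -- sum identity
  have h2 : (0:ℂ) = ∑ i ∈ Finset.range (d + 1), (f.coeff i : ℂ) * z ^ i := by
    rw [← hz, Polynomial.aeval_eq_sum_range]
    simp [zsmul_eq_mul, hd]
  rw [Finset.sum_range_succ] at h2
  have h3 : (f.coeff d : ℂ) * z ^ d = -∑ i ∈ Finset.range d, (f.coeff i : ℂ) * z ^ i := by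
    linear_combination -h2
  have h4 : ‖(f.coeff d : ℂ) * z ^ d‖
      ≤ ∑ i ∈ Finset.range d, ‖(f.coeff i : ℂ) * z ^ i‖ := by
    rw [h3, norm_neg]
    exact norm_sum_le _ _
  set A : ℝ := |(f.leadingCoeff : ℝ)| with hA
  have hA1 : (1:ℝ) ≤ A := by
    have h1 : 1 ≤ |f.leadingCoeff| := Int.one_le_abs (leadingCoeff_ne_zero.mpr hf)
    rw [hA, ← Int.cast_abs]
    exact_mod_cast h1
  have hlhs : ‖(f.coeff d : ℂ) * z ^ d‖ = A * r ^ d := by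
    have hc : f.coeff d = f.leadingCoeff := by rw [hd]; rfl
    rw [norm_mul, norm_pow, Complex.norm_intCast, hc, hA]
  have hrhs : ∑ i ∈ Finset.range d, ‖(f.coeff i : ℂ) * z ^ i‖
      ≤ normHeight f * A * ∑ i ∈ Finset.range d, r ^ i := by
    rw [Finset.mul_sum]
    apply Finset.sum_le_sum
    intro i hi
    rw [norm_mul, norm_pow, Complex.norm_intCast]
    have := coeff_abs_le f i (Finset.mem_range.mp hi)
    have hrp : (0:ℝ) ≤ r ^ i := pow_nonneg (by linarith) i
    calc |((f.coeff i : ℤ) : ℝ)| * r ^ i ≤ normHeight f * A * r ^ i := by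
          apply mul_le_mul_of_nonneg_right _ hrp
          rw [hA]; exact this
      _ = normHeight f * A * r ^ i := rfl
  have hgeom : ∑ i ∈ Finset.range d, r ^ i = (r ^ d - 1) / (r - 1) :=
    geom_sum_eq (ne_of_gt hr1) d
  have hrd : (0:ℝ) < r ^ d := pow_pos (by linarith) d
  have hkey : A * r ^ d ≤ normHeight f * A * ((r ^ d - 1) / (r - 1)) := by
    rw [← hgeom, ← hlhs]
    exact h4.trans hrhs
  have hr1' : (0:ℝ) < r - 1 := by linarith
  rw [div_eq_mul_inv, ← mul_assoc] at hkey
  have hkey2 : A * r ^ d * (r - 1) ≤ normHeight f * A * (r ^ d - 1) := by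
    calc A * r ^ d * (r - 1) ≤ normHeight f * A * (r ^ d - 1) * (r - 1)⁻¹ * (r - 1) := by
          apply mul_le_mul_of_nonneg_right hkey hr1'.le
      _ = normHeight f * A * (r ^ d - 1) := by field_simp
  have hHA : 0 ≤ normHeight f * A := mul_nonneg hH0 (by linarith)
  have hpos : 0 < (r - 1 - normHeight f) * (A * r ^ d) :=
    mul_pos (by linarith) (mul_pos (by linarith) hrd)
  nlinarith [hpos, hHA]

lemma multiset_pow_le_prod (m : Multiset ℝ) (a : ℝ) (ha : 1 ≤ a)
    (h : ∀ x ∈ m, a ≤ x) : a ^ (Multiset.card m) ≤ m.prod := by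
  induction m using Multiset.induction_on with
  | empty => simp
  | cons x t ih =>
    simp only [Multiset.card_cons, Multiset.prod_cons, pow_succ]
    have hx := h x (Multiset.mem_cons_self x t)
    have ht := ih (fun y hy => h y (Multiset.mem_cons_of_mem hy))
    have h1 : (1:ℝ) ≤ a ^ Multiset.card t := one_le_pow₀ ha
    calc a ^ Multiset.card t * a ≤ t.prod * x :=
          mul_le_mul ht hx (by linarith) (by linarith)
      _ = x * t.prod := mul_comm _ _

lemma sqrt_lt_half (x : ℝ) (hx : 3 ≤ x) : Real.sqrt x < (x + 1) / 2 := by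
  have h0 : (0:ℝ) ≤ x := by linarith
  have hs := Real.sq_sqrt h0
  set t := Real.sqrt x with ht
  have ht0 : 0 ≤ t := Real.sqrt_nonneg x
  have ht32 : 3/2 ≤ t := by nlinarith
  nlinarith [sq_nonneg (t - 3/2)]

theorem stmt18 (s : ℕ) (hs : 2 ≤ s) (f : Fin s → Polynomial ℤ)
    (hne : ∀ i, f i ≠ 0)
    (H : ℝ) (hH : H = ⨅ i : Fin s, normHeight (f i)) :
    (∀ z : ℂ, ∃ i, Polynomial.aeval z (f i) ≠ 0) ↔
      ∃ n : ℤ, 2 * H + 3 ≤ (n : ℝ) ∧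
        (((Finset.univ.gcd fun i => (f i).eval n : ℤ)) : ℝ) ≤ Real.sqrt (n : ℝ) := by
  have inst : Nonempty (Fin s) := ⟨⟨0, by omega⟩⟩
  have hH0 : 0 ≤ H := by
    rw [hH]; exact le_ciInf fun i => normHeight_nonneg (f i)
  constructor
  · -- forward: coprime → exists n
    intro h
    set F : Fin s → Polynomial ℚ := fun i => (f i).map (Int.castRingHom ℚ) with hF
    have hF0 : ∀ i, F i ≠ 0 := fun i =>
      (Polynomial.map_ne_zero_iff (f := Int.castRingHom ℚ) Int.cast_injective).mpr (hne i)
    have hspan : Ideal.span (Set.range F) = ⊤ := by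
      by_contra hne'
      obtain ⟨p, hp⟩ := (IsPrincipalIdealRing.principal (Ideal.span (Set.range F))).principal
      have hpdvd : ∀ i, p ∣ F i := fun i => by
        have : F i ∈ Ideal.span (Set.range F) := Ideal.subset_span (Set.mem_range_self i)
        rw [hp] at this
        exact (Ideal.mem_span_singleton).mp this
      have hp0 : p ≠ 0 := by
        intro h0
        exact hF0 ⟨0, by omega⟩ (by simpa [h0] using hpdvd ⟨0, by omega⟩)
      have hpu : ¬ IsUnit p := by
        intro hu
        exact hne' (by rw [hp]; exact Ideal.span_singleton_eq_top.mpr hu)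
      have hpdeg : 0 < p.degree := by
        rcases lt_or_ge 0 p.degree with h' | h'
        · exact h'
        · exfalso
          have : p.degree = 0 := le_antisymm h' (zero_le_degree_iff.mpr hp0)
          exact hpu (Polynomial.isUnit_iff_degree_eq_zero.mpr this)
      -- complex root
      obtain ⟨z, hzr⟩ := Complex.exists_root (f := p.map (algebraMap ℚ ℂ))
        (by rwa [Polynomial.degree_map_eq_of_injective (algebraMap ℚ ℂ).injective])
      obtain ⟨i, hi⟩ := h z
      apply hi
      obtain ⟨t, ht⟩ := hpdvd i
      have hmap : (f i).map (Int.castRingHom ℂ) =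
          p.map (algebraMap ℚ ℂ) * t.map (algebraMap ℚ ℂ) := by
        rw [← Polynomial.map_mul, ← ht, hF]
        rw [Polynomial.map_map]
        congr 1
      have : Polynomial.aeval z (f i) = ((f i).map (Int.castRingHom ℂ)).eval z := by
        rw [Polynomial.aeval_def, Polynomial.eval_map]
        rfl
      rw [this, hmap, Polynomial.eval_mul, hzr.eq_zero, zero_mul]
    have h1 : (1 : Polynomial ℚ) ∈ Ideal.span (Set.range F) := by
      rw [hspan]; trivial
    rw [Ideal.span, Submodule.mem_span_range_iff_exists_fun] at h1
    obtain ⟨c, hc⟩ := h1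
    choose b hb using fun i =>
      IsLocalization.integerNormalization_map_to_map (nonZeroDivisors ℤ) (c i)
    set v : Fin s → Polynomial ℤ :=
      fun i => IsLocalization.integerNormalization (nonZeroDivisors ℤ) (c i) with hv
    set d : ℤ := ∏ i, (b i : ℤ) with hdd
    have hd0 : d ≠ 0 :=
      Finset.prod_ne_zero_iff.mpr fun i _ => mem_nonZeroDivisors_iff_ne_zero.mp (b i).2
    set n : ℤ := max ⌈2 * H + 3⌉ (d ^ 2) with hn
    -- evaluate Bezout identity at n
    have hc' : ∑ i, (c i).eval ((n:ℤ):ℚ) * (((f i).eval n : ℤ) : ℚ) = 1 := by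
      have := congrArg (Polynomial.eval ((n:ℤ):ℚ)) hc
      simpa [Polynomial.eval_finset_sum, smul_eq_mul, hF] using this
    have hbq : ∀ i, (((v i).eval n : ℤ) : ℚ) = ((b i : ℤ) : ℚ) * (c i).eval ((n:ℤ):ℚ) := by
      intro i
      have := congrArg (Polynomial.eval ((n:ℤ):ℚ)) (hb i)
      simpa [zsmul_eq_mul] using this
    have hterm : ∀ i : Fin s,
        (∏ j ∈ Finset.univ.erase i, ((b j : ℤ) : ℚ)) * (((v i).eval n : ℤ):ℚ)
          * (((f i).eval n : ℤ):ℚ)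
        = (d:ℚ) * ((c i).eval ((n:ℤ):ℚ) * (((f i).eval n : ℤ):ℚ)) := by
      intro i
      rw [hbq i]
      have he : (∏ j ∈ Finset.univ.erase i, (b j : ℤ)) * (b i : ℤ) = d :=
        Finset.prod_erase_mul _ _ (Finset.mem_univ i)
      push_cast [← he]
      ring
    have hkeyQ : ((∑ i, (∏ j ∈ Finset.univ.erase i, (b j : ℤ)) * ((v i).eval n)
        * ((f i).eval n) : ℤ) : ℚ) = (d : ℚ) := by
      push_cast
      rw [Finset.sum_congr rfl fun i _ => hterm i, ← Finset.mul_sum, hc', mul_one]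
    have hkeyZ : ∑ i, (∏ j ∈ Finset.univ.erase i, (b j : ℤ)) * ((v i).eval n)
        * ((f i).eval n) = d := by exact_mod_cast hkeyQ
    set D : ℤ := Finset.univ.gcd fun i => (f i).eval n with hD
    have hDdvd : D ∣ d := by
      rw [← hkeyZ]
      exact Finset.dvd_sum fun i _ => Dvd.dvd.mul_left (Finset.gcd_dvd (Finset.mem_univ i)) _
    have hDle : D ≤ |d| := Int.le_of_dvd (abs_pos.mpr hd0) ((dvd_abs _ _).mpr hDdvd)
    refine ⟨n, ?_, ?_⟩
    · calc 2 * H + 3 ≤ ((⌈2 * H + 3⌉ : ℤ) : ℝ) := Int.le_ceil _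
        _ ≤ ((n:ℤ):ℝ) := by exact_mod_cast Int.cast_le.mpr (le_max_left _ _)
    · have h2 : ((d:ℝ))^2 ≤ (n:ℝ) := by
        have : (d^2 : ℤ) ≤ n := le_max_right _ _
        exact_mod_cast this
      calc (D : ℝ) ≤ (|d| : ℤ) := by exact_mod_cast hDle
        _ = |(d:ℝ)| := by push_cast; rfl
        _ = Real.sqrt ((d:ℝ)^2) := (Real.sqrt_sq_eq_abs _).symm
        _ ≤ Real.sqrt (n:ℝ) := Real.sqrt_le_sqrt h2
  · -- backward
    rintro ⟨n, hn1, hn2⟩ z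
    by_contra hz
    push_neg at hz
    have hn3 : (3:ℝ) ≤ (n:ℝ) := by linarith
    -- z is integral over ℚ
    have halg : IsAlgebraic ℚ z := by
      refine ⟨(f ⟨0, by omega⟩).map (algebraMap ℤ ℚ), ?_, ?_⟩
      · exact (Polynomial.map_ne_zero_iff (algebraMap ℤ ℚ).injective_int).mpr (hne ⟨0, by omega⟩)
      · rw [Polynomial.aeval_map_algebraMap]; exact hz ⟨0, by omega⟩
    have hint : IsIntegral ℚ z := halg.isIntegral
    set p := minpoly ℚ z with hp
    have hp0 : p ≠ 0 := minpoly.ne_zero hint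
    have hpdeg : 0 < p.natDegree := minpoly.natDegree_pos hint
    have hpdvd : ∀ i, p ∣ (f i).map (algebraMap ℤ ℚ) := fun i =>
      minpoly.dvd ℚ z (by rw [Polynomial.aeval_map_algebraMap]; exact hz i)
    set q := IsLocalization.integerNormalization (nonZeroDivisors ℤ) p with hqdef
    obtain ⟨B, hB⟩ := IsLocalization.integerNormalization_map_to_map (nonZeroDivisors ℤ) p
    have hBne : (B : ℤ) ≠ 0 := mem_nonZeroDivisors_iff_ne_zero.mp B.2
    have hq0 : q ≠ 0 := by
      intro h0
      rw [← hqdef] at hB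
      rw [h0, Polynomial.map_zero] at hB
      rcases smul_eq_zero.mp hB.symm with h | h
      · exact hBne h
      · exact hp0 h
    set g := q.primPart with hg
    have hgprim : g.IsPrimitive := q.isPrimitive_primPart
    have hg0 : g ≠ 0 := q.primPart_ne_zero
    have hcq : q.content ≠ 0 := fun h => hq0 (Polynomial.content_eq_zero_iff.mp h)
    -- map g is a unit multiple of p
    have hmapeq : Polynomial.C ((q.content : ℤ) : ℚ) * g.map (algebraMap ℤ ℚ)
        = Polynomial.C ((B : ℤ) : ℚ) * p := by
      have h2 : q.map (algebraMap ℤ ℚ) = (B : ℤ) • p := by rw [← hqdef] at hB; exact hB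
      have h3 : q = Polynomial.C q.content * g := q.eq_C_content_mul_primPart
      rw [h3, Polynomial.map_mul, Polynomial.map_C] at h2
      rw [eq_intCast (algebraMap ℤ ℚ) q.content] at h2
      rw [h2, zsmul_eq_mul]
      norm_cast
    have huC : IsUnit (Polynomial.C ((B : ℤ) : ℚ)) :=
      Polynomial.isUnit_C.mpr (isUnit_iff_ne_zero.mpr (by exact_mod_cast hBne))
    have huc : IsUnit (Polynomial.C ((q.content : ℤ) : ℚ)) :=
      Polynomial.isUnit_C.mpr (isUnit_iff_ne_zero.mpr (by exact_mod_cast hcq))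
    have hgp : g.map (algebraMap ℤ ℚ) ∣ p := by
      have : g.map (algebraMap ℤ ℚ) ∣ Polynomial.C ((B : ℤ) : ℚ) * p :=
        ⟨Polynomial.C ((q.content : ℤ) : ℚ), by rw [← hmapeq]; ring⟩
      exact (huC.dvd_mul_left).mp this
    have hgdeg : 0 < g.natDegree := by
      have h4 : (g.map (algebraMap ℤ ℚ)).natDegree = p.natDegree := by
        have := congrArg Polynomial.natDegree hmapeq
        rwa [Polynomial.natDegree_C_mul (by exact_mod_cast hcq),
          Polynomial.natDegree_C_mul (by exact_mod_cast hBne)] at this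
      rw [Polynomial.natDegree_map_eq_of_injective (algebraMap ℤ ℚ).injective_int] at h4
      omega
    have hgdvd : ∀ i, g ∣ f i := by
      intro i
      have hcfi : (f i).content ≠ 0 := fun h => hne i (Polynomial.content_eq_zero_iff.mp h)
      have hufi : IsUnit (Polynomial.C (((f i).content : ℤ) : ℚ)) :=
        Polynomial.isUnit_C.mpr (isUnit_iff_ne_zero.mpr (by exact_mod_cast hcfi))
      have h5 : g.map (algebraMap ℤ ℚ) ∣ ((f i).primPart).map (algebraMap ℤ ℚ) := by
        have h6 : (f i).map (algebraMap ℤ ℚ)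
            = Polynomial.C (((f i).content : ℤ) : ℚ) * ((f i).primPart).map (algebraMap ℤ ℚ) := by
          conv_lhs => rw [(f i).eq_C_content_mul_primPart]
          rw [Polynomial.map_mul, Polynomial.map_C]
          rfl
        have h7 : g.map (algebraMap ℤ ℚ) ∣ (f i).map (algebraMap ℤ ℚ) :=
          hgp.trans (hpdvd i)
        rw [h6] at h7
        exact (hufi.dvd_mul_left).mp h7
      exact (hgprim.dvd_of_fraction_map_dvd_fraction_map
        h5).trans (f i).primPart_dvd
    -- the gcd of values
    set D : ℤ := Finset.univ.gcd fun i => (f i).eval n with hD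
    have hD0 : 0 ≤ D :=
      Int.nonneg_of_normalize_eq_self (Finset.normalize_gcd)
    -- common root bound helper
    have hrootbound : ∀ w : ℂ, (∀ i, Polynomial.aeval w (f i) = 0) →
        ‖w‖ ≤ 1 + H := by
      intro w hw
      have h8 : ∀ i, ‖w‖ - 1 ≤ normHeight (f i) := fun i => by
        have := root_abs_le (f i) (hne i) w (hw i)
        linarith
      have : ‖w‖ - 1 ≤ H := by
        rw [hH]; exact le_ciInf fun i => h8 i
      linarith
    have hDne : D ≠ 0 := by
      intro h0
      rw [hD, Finset.gcd_eq_zero_iff] at h0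
      have hw : ∀ i, Polynomial.aeval ((n : ℤ) : ℂ) (f i) = 0 := by
        intro i
        have h9 : Polynomial.aeval ((n:ℤ):ℂ) (f i)
            = ((f i).map (Int.castRingHom ℂ)).eval ((n:ℤ):ℂ) := by
          rw [Polynomial.aeval_def, Polynomial.eval_map]; rfl
        have h00 : eval n (f i) = 0 := h0 i (Finset.mem_univ i)
        rw [h9, Polynomial.eval_intCast_map]
        simp [h00]
      have := hrootbound _ hw
      rw [Complex.norm_intCast, abs_of_nonneg (by linarith : (0:ℝ) ≤ (n:ℝ))] at this
      linarith
    have hDpos : 0 < D := lt_of_le_of_ne hD0 (Ne.symm hDne)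
    have hgvdvd : g.eval n ∣ D := by
      apply Finset.dvd_gcd
      intro i _
      obtain ⟨t, ht⟩ := hgdvd i
      exact ⟨t.eval n, by rw [ht, Polynomial.eval_mul]⟩
    have habsle : |g.eval n| ≤ D := Int.le_of_dvd hDpos ((abs_dvd _ _).mpr hgvdvd)
    -- lower bound on |g(n)| via complex roots
    set G := g.map (Int.castRingHom ℂ) with hG
    have hG0 : G ≠ 0 :=
      (Polynomial.map_ne_zero_iff (f := Int.castRingHom ℂ) Int.cast_injective).mpr hg0
    have hsplit : G.Splits := IsAlgClosed.splits G
    have heq := hsplit.eq_prod_roots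
    have hcard : Multiset.card G.roots = g.natDegree := by
      rw [Polynomial.splits_iff_card_roots.mp hsplit]
      exact Polynomial.natDegree_map_eq_of_injective Int.cast_injective g
    have hrootsb : ∀ r ∈ G.roots, ‖r‖ ≤ 1 + H := by
      intro r hr
      have hri : G.IsRoot r := Polynomial.isRoot_of_mem_roots hr
      apply hrootbound
      intro i
      obtain ⟨t, ht⟩ := hgdvd i
      have h10 : Polynomial.aeval r (f i) = ((f i).map (Int.castRingHom ℂ)).eval r := by
        rw [Polynomial.aeval_def, Polynomial.eval_map]; rfl
      rw [h10, ht, Polynomial.map_mul, Polynomial.eval_mul, ← hG, hri.eq_zero, zero_mul]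
    have hfactor : ∀ r ∈ G.roots, ((n:ℝ) + 1) / 2 ≤ ‖(n:ℂ) - r‖ := by
      intro r hr
      have h11 := hrootsb r hr
      have h12 : ‖(n:ℂ)‖ - ‖r‖ ≤ ‖(n:ℂ) - r‖ := by
        exact norm_sub_norm_le _ _
      have h13 : ‖((n:ℤ):ℂ)‖ = (n:ℝ) := by
        rw [Complex.norm_intCast, abs_of_nonneg (by linarith : (0:ℝ) ≤ (n:ℝ))]
      push_cast at h12 h13 ⊢
      linarith
    have hevG : ‖G.eval ((n:ℤ):ℂ)‖
        = ‖G.leadingCoeff‖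
          * ((G.roots.map fun a => ‖((n:ℤ):ℂ) - a‖).prod) := by
      conv_lhs => rw [heq]
      rw [Polynomial.eval_mul, Polynomial.eval_C, norm_mul, Polynomial.eval_multiset_prod,
        Multiset.map_map, (fun m => by simpa using map_multiset_prod (normHom : ℂ →*₀ ℝ) m :
          ∀ m : Multiset ℂ, ‖m.prod‖ = (m.map fun x => ‖x‖).prod), Multiset.map_map]
      congr 2
      ext a
      simp
    have hlead : (1:ℝ) ≤ ‖G.leadingCoeff‖ := by
      have hgl : G.leadingCoeff = ((g.leadingCoeff : ℤ) : ℂ) := by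
        rw [hG, Polynomial.leadingCoeff_map_of_injective Int.cast_injective, eq_intCast]
      rw [hgl, Complex.norm_intCast, ← Int.cast_abs]
      have : 1 ≤ |g.leadingCoeff| := Int.one_le_abs (leadingCoeff_ne_zero.mpr hg0)
      exact_mod_cast this
    have hhalf1 : (1:ℝ) ≤ ((n:ℝ) + 1) / 2 := by linarith
    have hprodb : ((n:ℝ) + 1) / 2 ≤ (G.roots.map fun a => ‖((n:ℤ):ℂ) - a‖).prod := by
      have h14 : (((n:ℝ) + 1) / 2) ^ (Multiset.card (G.roots.map
          fun a => ‖((n:ℤ):ℂ) - a‖))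
          ≤ (G.roots.map fun a => ‖((n:ℤ):ℂ) - a‖).prod := by
        apply multiset_pow_le_prod _ _ hhalf1
        intro x hx
        obtain ⟨r, hr, rfl⟩ := Multiset.mem_map.mp hx
        have := hfactor r hr
        push_cast at this ⊢
        linarith
      have h15 : Multiset.card (G.roots.map fun a => ‖((n:ℤ):ℂ) - a‖)
          = g.natDegree := by rw [Multiset.card_map, hcard]
      calc ((n:ℝ) + 1) / 2
          ≤ (((n:ℝ) + 1) / 2) ^ g.natDegree := le_self_pow₀ hhalf1 (by omega)
        _ ≤ _ := by rw [← h15]; exact h14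
    have hGev : ‖G.eval ((n:ℤ):ℂ)‖ = ((|g.eval n| : ℤ) : ℝ) := by
      rw [hG, Polynomial.eval_intCast_map, eq_intCast, Complex.norm_intCast, ← Int.cast_abs]
      simp [Int.cast_id]
    have hlower : ((n:ℝ) + 1) / 2 ≤ ((|g.eval n| : ℤ) : ℝ) := by
      rw [← hGev, hevG]
      calc ((n:ℝ) + 1) / 2 = 1 * (((n:ℝ) + 1) / 2) := (one_mul _).symm
        _ ≤ ‖G.leadingCoeff‖
            * ((G.roots.map fun a => ‖((n:ℤ):ℂ) - a‖).prod) :=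
          mul_le_mul hlead hprodb (by linarith) (by linarith)
    have hsq := sqrt_lt_half (n:ℝ) hn3
    have hDR : ((|g.eval n| : ℤ) : ℝ) ≤ (D : ℝ) := by exact_mod_cast habsle
    linarith
end
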